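/- arXiv:math/0405190 — 8 statements merged into one kernel-verified Lean document; each statement's English description precedes it below -/
import Mathlib

section
/- For 0 < β < √2/2 and β < |s| ≤ √2/2, the principal value integral ∫_{−β}^{β} sqrt(β² − t²)/(s − t) dt equals π·sgn(s)·(|s| − sqrt(s² − β²)); and for |s| < β this principal value integral equals π·s. -/
open Real intervalIntegral Filter

lemma sqrt_one_sub_div_sq {β t : ℝ} (hβ : 0 < β) :
    Real.sqrt (1 - (t / β) ^ 2) = Real.sqrt (β ^ 2 - t ^ 2) / β := by
  rw [show (1 : ℝ) - (t / β) ^ 2 = (β ^ 2 - t ^ 2) / β ^ 2 by field_simp]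
  rw [Real.sqrt_div' _ (by positivity), Real.sqrt_sq hβ.le]

lemma deriv_arcsin_div {β s t : ℝ} (hβ : 0 < β) (ht : t ∈ Set.Ioo (-β) β) :
    HasDerivAt (fun x => s * Real.arcsin (x / β)) (s / Real.sqrt (β ^ 2 - t ^ 2)) t := by
  obtain ⟨h1, h2⟩ := ht
  have hR : 0 < β ^ 2 - t ^ 2 := by nlinarith
  have hne1 : t / β ≠ -1 := by
    intro h; rw [div_eq_iff hβ.ne'] at h; nlinarith
  have hne2 : t / β ≠ 1 := by
    intro h; rw [div_eq_iff hβ.ne'] at h; nlinarith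
  have h := (Real.hasDerivAt_arcsin hne1 hne2).comp t ((hasDerivAt_id t).div_const β)
  have h2' := h.const_mul s
  refine h2'.congr_deriv (Eq.symm ?_)
  rw [sqrt_one_sub_div_sq hβ]
  have : Real.sqrt (β ^ 2 - t ^ 2) ≠ 0 := by positivity
  field_simp

lemma deriv_sqrt_sub {β t : ℝ} (hβ : 0 < β) (ht : t ∈ Set.Ioo (-β) β) :
    HasDerivAt (fun x => Real.sqrt (β ^ 2 - x ^ 2)) (-(t / Real.sqrt (β ^ 2 - t ^ 2))) t := by
  obtain ⟨h1, h2⟩ := ht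
  have hR : 0 < β ^ 2 - t ^ 2 := by nlinarith
  have h := (Real.hasDerivAt_sqrt hR.ne').comp t
    (((hasDerivAt_id t).pow 2).const_sub (β ^ 2))
  refine h.congr_deriv (Eq.symm ?_)
  have : Real.sqrt (β ^ 2 - t ^ 2) ≠ 0 := by positivity
  field_simp
  simp only [id_eq]
  ring
lemma deriv_F1 {β s t : ℝ} (hβ : 0 < β) (hs : β < s) (ht : t ∈ Set.Ioo (-β) β) :
    HasDerivAt (fun x => Real.sqrt (s ^ 2 - β ^ 2) *
        Real.arcsin ((β ^ 2 - s * x) / (β * (s - x))))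
      ((β ^ 2 - s ^ 2) / ((s - t) * Real.sqrt (β ^ 2 - t ^ 2))) t := by
  obtain ⟨h1, h2⟩ := ht
  have hR : 0 < β ^ 2 - t ^ 2 := by nlinarith
  have hA : 0 < s ^ 2 - β ^ 2 := by nlinarith
  have hst : 0 < s - t := by linarith
  have hD : β * (s - t) ≠ 0 := by positivity
  have hkey : (β * (s - t)) ^ 2 - (β ^ 2 - s * t) ^ 2 = (s ^ 2 - β ^ 2) * (β ^ 2 - t ^ 2) := by
    ring
  have hu2 : ((β ^ 2 - s * t) / (β * (s - t))) ^ 2 < 1 := by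
    rw [div_pow, div_lt_one (by positivity)]
    nlinarith
  have habs : |(β ^ 2 - s * t) / (β * (s - t))| < 1 := by
    rw [← Real.sqrt_sq_eq_abs, show (1:ℝ) = Real.sqrt 1 by simp]
    exact Real.sqrt_lt_sqrt (by positivity) (by simpa using hu2)
  have hne1 : (β ^ 2 - s * t) / (β * (s - t)) ≠ -1 := by
    intro h; rw [h] at habs; norm_num at habs
  have hne2 : (β ^ 2 - s * t) / (β * (s - t)) ≠ 1 := by
    intro h; rw [h] at habs; norm_num at habs
  have hnum : HasDerivAt (fun x => β ^ 2 - s * x) (-s) t := by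
    simpa using ((hasDerivAt_id t).const_mul s).const_sub (β ^ 2)
  have hden : HasDerivAt (fun x => β * (s - x)) (-β) t := by
    simpa using ((hasDerivAt_id t).const_sub s).const_mul β
  have hu : HasDerivAt (fun x => (β ^ 2 - s * x) / (β * (s - x)))
      ((-s * (β * (s - t)) - (β ^ 2 - s * t) * (-β)) / (β * (s - t)) ^ 2) t :=
    hnum.div hden hD
  have h := ((Real.hasDerivAt_arcsin hne1 hne2).comp t hu).const_mul
    (Real.sqrt (s ^ 2 - β ^ 2))
  refine h.congr_deriv (Eq.symm ?_)
  have hsq : 1 - ((β ^ 2 - s * t) / (β * (s - t))) ^ 2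
      = (s ^ 2 - β ^ 2) * (β ^ 2 - t ^ 2) / (β * (s - t)) ^ 2 := by
    field_simp; ring
  rw [hsq, Real.sqrt_div' _ (by positivity), Real.sqrt_mul hA.le,
    Real.sqrt_sq (by positivity)]
  have hr0 : Real.sqrt (β ^ 2 - t ^ 2) ≠ 0 := by positivity
  have ha0 : Real.sqrt (s ^ 2 - β ^ 2) ≠ 0 := by positivity
  have hr2 : Real.sqrt (β ^ 2 - t ^ 2) ^ 2 = β ^ 2 - t ^ 2 := Real.sq_sqrt hR.le
  have ha2 : Real.sqrt (s ^ 2 - β ^ 2) ^ 2 = s ^ 2 - β ^ 2 := Real.sq_sqrt hA.le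
  field_simp
  nlinarith [hr2, ha2, sq_nonneg (Real.sqrt (β ^ 2 - t ^ 2)), mul_pos hst hR]

lemma part1_pos {β s : ℝ} (hβ : 0 < β) (hs : β < s) :
    (∫ t in (-β)..β, Real.sqrt (β ^ 2 - t ^ 2) / (s - t))
      = π * s - π * Real.sqrt (s ^ 2 - β ^ 2) := by
  set A := Real.sqrt (s ^ 2 - β ^ 2) with hA
  set F : ℝ → ℝ := fun x => s * Real.arcsin (x / β) - Real.sqrt (β ^ 2 - x ^ 2)
    + A * Real.arcsin ((β ^ 2 - s * x) / (β * (s - x))) with hF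
  have hlt : -β < β := by linarith
  have hderiv : ∀ t ∈ Set.Ioo (-β) β,
      HasDerivAt F (Real.sqrt (β ^ 2 - t ^ 2) / (s - t)) t := by
    intro t ht
    obtain ⟨h1, h2⟩ := ht
    have hR : 0 < β ^ 2 - t ^ 2 := by nlinarith
    have hst : 0 < s - t := by linarith
    have h := ((deriv_arcsin_div hβ ⟨h1, h2⟩ (s := s)).sub
      (deriv_sqrt_sub hβ ⟨h1, h2⟩)).add (deriv_F1 hβ hs ⟨h1, h2⟩)
    refine h.congr_deriv (Eq.symm ?_)
    have hr0 : Real.sqrt (β ^ 2 - t ^ 2) ≠ 0 := by positivity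
    have hr2 : Real.sqrt (β ^ 2 - t ^ 2) ^ 2 = β ^ 2 - t ^ 2 := Real.sq_sqrt hR.le
    field_simp
    linear_combination hr2
  have hcont : ContinuousOn (fun t => Real.sqrt (β ^ 2 - t ^ 2) / (s - t))
      (Set.uIcc (-β) β) := by
    apply ContinuousOn.div
    · exact (Real.continuous_sqrt.comp (by continuity)).continuousOn
    · exact (continuous_const.sub continuous_id).continuousOn
    · intro x hx
      rw [Set.uIcc_of_le hlt.le] at hx
      intro h; nlinarith [hx.2]
  have hint : IntervalIntegrable (fun t => Real.sqrt (β ^ 2 - t ^ 2) / (s - t))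
      MeasureTheory.volume (-β) β := hcont.intervalIntegrable
  have hFAt : ∀ x : ℝ, x ≠ s → ContinuousAt F x := by
    intro x hx
    apply ContinuousAt.add
    · exact (continuousAt_const.mul ((Real.continuous_arcsin.continuousAt).comp
        (continuousAt_id.div_const β))).sub
        ((Real.continuous_sqrt.comp (by continuity)).continuousAt)
    · apply continuousAt_const.mul
      apply (Real.continuous_arcsin.continuousAt).comp
      apply ContinuousAt.div (by fun_prop) (by fun_prop)
      simp only [mul_ne_zero_iff]
      constructor
      · exact hβ.ne'
      · exact sub_ne_zero_of_ne (fun h => hx h.symm)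
  have hFa : F (-β) = -(s * (π / 2)) + A * (π / 2) := by
    simp only [hF]
    rw [show (-β) / β = -1 by field_simp, Real.arcsin_neg, Real.arcsin_one]
    rw [show β ^ 2 - (-β) ^ 2 = 0 by ring, Real.sqrt_zero]
    rw [show (β ^ 2 - s * -β) / (β * (s - -β)) = 1 by
      rw [div_eq_one_iff_eq (ne_of_gt (by nlinarith))]; ring]
    rw [Real.arcsin_one]; ring
  have hFb : F β = s * (π / 2) - A * (π / 2) := by
    simp only [hF]
    rw [show β / β = 1 by field_simp, Real.arcsin_one]
    rw [show β ^ 2 - β ^ 2 = 0 by ring, Real.sqrt_zero]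
    rw [show (β ^ 2 - s * β) / (β * (s - β)) = -1 by
      rw [div_eq_iff (ne_of_gt (by nlinarith))]; ring]
    rw [Real.arcsin_neg, Real.arcsin_one]; ring
  rw [intervalIntegral.integral_eq_sub_of_hasDerivAt_of_tendsto hlt hderiv hint
    (((hFAt (-β) (by intro h; nlinarith)).tendsto).mono_left nhdsWithin_le_nhds)
    (((hFAt β (by intro h; nlinarith)).tendsto).mono_left nhdsWithin_le_nhds)]
  rw [hFa, hFb]; ring

lemma part1_all {β s : ℝ} (hβ : 0 < β) (hs : β < |s|) :
    (∫ t in (-β)..β, Real.sqrt (β ^ 2 - t ^ 2) / (s - t))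
      = π * Real.sign s * (|s| - Real.sqrt (s ^ 2 - β ^ 2)) := by
  rcases lt_or_ge 0 s with hpos | hneg
  · have habs : |s| = s := abs_of_pos hpos
    rw [habs] at hs ⊢
    rw [part1_pos hβ hs, Real.sign_of_pos hpos]; ring
  · have hsneg : s < 0 := by
      rcases hneg.lt_or_eq with h | h
      · exact h
      · subst h; simp at hs; linarith
    have habs : |s| = -s := abs_of_neg hsneg
    have hs' : β < -s := by rw [habs] at hs; exact hs
    have key := part1_pos hβ hs'
    have hneg' : (∫ t in (-β)..β, Real.sqrt (β ^ 2 - t ^ 2) / (s - t))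
        = -(∫ t in (-β)..β, Real.sqrt (β ^ 2 - t ^ 2) / (-s - t)) := by
      have h2 := intervalIntegral.integral_comp_neg
        (fun t => Real.sqrt (β ^ 2 - t ^ 2) / (-s - t)) (a := -β) (b := β)
      simp only [neg_neg] at h2
      rw [← h2, ← intervalIntegral.integral_neg]
      apply intervalIntegral.integral_congr
      intro x _
      simp only
      rw [show (-x) ^ 2 = x ^ 2 by ring, show -s - -x = -(s - x) by ring,
        div_neg, neg_neg]
    rw [hneg', key, habs, Real.sign_of_neg hsneg,
      show (-s) ^ 2 - β ^ 2 = s ^ 2 - β ^ 2 by ring]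
    ring
lemma deriv_sqrt_sub' {β t : ℝ} (ht : t ∈ Set.Ioo (-β) β) :
    HasDerivAt (fun x => Real.sqrt (β ^ 2 - x ^ 2)) (-(t / Real.sqrt (β ^ 2 - t ^ 2))) t := by
  obtain ⟨h1, h2⟩ := ht
  have hR : 0 < β ^ 2 - t ^ 2 := by nlinarith
  have h := (Real.hasDerivAt_sqrt hR.ne').comp t
    (((hasDerivAt_id t).pow 2).const_sub (β ^ 2))
  refine h.congr_deriv (Eq.symm ?_)
  have : Real.sqrt (β ^ 2 - t ^ 2) ≠ 0 := by positivity
  field_simp; simp only [id_eq]; ring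

lemma deriv_log_part {β s t : ℝ} (hβ : 0 < β) (hs : |s| < β)
    (ht : t ∈ Set.Ioo (-β) β) (hts : t ≠ s) :
    HasDerivAt (fun x => Real.sqrt (β ^ 2 - s ^ 2) *
        Real.log ((β ^ 2 - s * x + Real.sqrt (β ^ 2 - s ^ 2) * Real.sqrt (β ^ 2 - x ^ 2))
          / (s - x)))
      ((β ^ 2 - s ^ 2) / ((s - t) * Real.sqrt (β ^ 2 - t ^ 2))) t := by
  obtain ⟨h1, h2⟩ := ht
  have hR : 0 < β ^ 2 - t ^ 2 := by nlinarith
  have hB : 0 < β ^ 2 - s ^ 2 := by nlinarith [abs_lt.mp hs]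
  set B := Real.sqrt (β ^ 2 - s ^ 2) with hBdef
  have hB0 : 0 < B := Real.sqrt_pos.mpr hB
  have hB2 : B ^ 2 = β ^ 2 - s ^ 2 := Real.sq_sqrt hB.le
  set r := Real.sqrt (β ^ 2 - t ^ 2) with hrdef
  have hr0 : 0 < r := Real.sqrt_pos.mpr hR
  have hr2 : r ^ 2 = β ^ 2 - t ^ 2 := Real.sq_sqrt hR.le
  have hst : s - t ≠ 0 := sub_ne_zero_of_ne (Ne.symm hts)
  have hNpos : 0 < β ^ 2 - s * t + B * r := by
    have h3 : s * t < β ^ 2 := by nlinarith [abs_lt.mp hs]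
    nlinarith [mul_pos hB0 hr0]
  -- derivative of numerator
  have hnum : HasDerivAt (fun x => β ^ 2 - s * x + B * Real.sqrt (β ^ 2 - x ^ 2))
      (-s + B * (-(t / r))) t := by
    have := (((hasDerivAt_id t).const_mul s).const_sub (β ^ 2)).add
      ((deriv_sqrt_sub' ⟨h1, h2⟩).const_mul B)
    refine this.congr_deriv (Eq.symm ?_); simp [hrdef]
  have hden : HasDerivAt (fun x => s - x) (-1) t := by
    simpa using (hasDerivAt_id t).const_sub s
  have hg : HasDerivAt (fun x => (β ^ 2 - s * x + B * Real.sqrt (β ^ 2 - x ^ 2)) / (s - x))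
      (((-s + B * (-(t / r))) * (s - t) - (β ^ 2 - s * t + B * r) * (-1)) / (s - t) ^ 2) t :=
    hnum.div hden hst
  have hgne : (β ^ 2 - s * t + B * r) / (s - t) ≠ 0 :=
    div_ne_zero hNpos.ne' hst
  have h := ((Real.hasDerivAt_log hgne).comp t hg).const_mul B
  refine h.congr_deriv (Eq.symm ?_)
  have key : ((-s + B * (-(t / r))) * (s - t) - (β ^ 2 - s * t + B * r) * (-1))
      = B * (β ^ 2 - s * t + B * r) / r := by
    field_simp
    linear_combination (-r) * hB2 + B * hr2
  rw [key]
  have final : B * (((β ^ 2 - s * t + B * r) / (s - t))⁻¹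
      * ((B * (β ^ 2 - s * t + B * r) / r) / (s - t) ^ 2)) = B ^ 2 / ((s - t) * r) := by
    rw [inv_div]
    field_simp
  rw [final, hB2]

set_option maxHeartbeats 1000000 in
lemma part2 {β s : ℝ} (hβ : 0 < β) (hs : |s| < β) :
    Filter.Tendsto (fun ε : ℝ =>
        (∫ t in (-β)..(s - ε), Real.sqrt (β ^ 2 - t ^ 2) / (s - t)) +
        (∫ t in (s + ε)..β, Real.sqrt (β ^ 2 - t ^ 2) / (s - t)))
      (nhdsWithin 0 (Set.Ioi 0)) (nhds (π * s)) := by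
  obtain ⟨hs1, hs2⟩ := abs_lt.mp hs
  set B := Real.sqrt (β ^ 2 - s ^ 2) with hBdef
  have hBpos : 0 < β ^ 2 - s ^ 2 := by nlinarith
  have hB0 : 0 < B := Real.sqrt_pos.mpr hBpos
  set N : ℝ → ℝ := fun x => β ^ 2 - s * x + B * Real.sqrt (β ^ 2 - x ^ 2) with hNdef
  have hNcont : Continuous N := by
    apply Continuous.add
    · exact continuous_const.sub (continuous_const.mul continuous_id)
    · exact continuous_const.mul (Real.continuous_sqrt.comp (by continuity))
  have hNpos : ∀ x ∈ Set.Icc (-β) β, 0 < N x := by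
    intro x hx
    have h1 : s * x < β ^ 2 := by
      calc s * x ≤ |s| * |x| := by rw [← abs_mul]; exact le_abs_self _
        _ ≤ |s| * β := mul_le_mul_of_nonneg_left (abs_le.mpr ⟨hx.1, hx.2⟩) (abs_nonneg s)
        _ < β * β := mul_lt_mul_of_pos_right hs hβ
        _ = β ^ 2 := (sq β).symm
    have h2 : 0 ≤ B * Real.sqrt (β ^ 2 - x ^ 2) := by positivity
    simp only [hNdef]; linarith
  set Φ : ℝ → ℝ := fun x => s * Real.arcsin (x / β) - Real.sqrt (β ^ 2 - x ^ 2)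
    + B * Real.log (N x / (s - x)) with hΦdef
  have hΦderiv : ∀ t ∈ Set.Ioo (-β) β, t ≠ s →
      HasDerivAt Φ (Real.sqrt (β ^ 2 - t ^ 2) / (s - t)) t := by
    intro t ht hts
    have hR : 0 < β ^ 2 - t ^ 2 := by nlinarith [ht.1, ht.2]
    have hst : s - t ≠ 0 := sub_ne_zero_of_ne (Ne.symm hts)
    have h := ((deriv_arcsin_div hβ ht (s := s)).sub
      (deriv_sqrt_sub hβ ht)).add (deriv_log_part hβ hs ht hts)
    refine h.congr_deriv (Eq.symm ?_)
    have hr0 : Real.sqrt (β ^ 2 - t ^ 2) ≠ 0 := by positivity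
    have hr2 : Real.sqrt (β ^ 2 - t ^ 2) ^ 2 = β ^ 2 - t ^ 2 := Real.sq_sqrt hR.le
    field_simp
    linear_combination hr2
  have hΦAt : ∀ x ∈ Set.Icc (-β) β, x ≠ s → ContinuousAt Φ x := by
    intro x hx hxs
    have hsx : s - x ≠ 0 := sub_ne_zero_of_ne (Ne.symm hxs)
    apply ContinuousAt.add
    · exact (continuousAt_const.mul ((Real.continuous_arcsin.continuousAt).comp
        (continuousAt_id.div_const β))).sub
        ((Real.continuous_sqrt.comp (by continuity)).continuousAt)
    · apply continuousAt_const.mul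
      exact ContinuousAt.log ((hNcont.continuousAt).div (by fun_prop) hsx)
        (div_ne_zero (hNpos x hx).ne' hsx)
  have hΦa : Φ (-β) = -(s * (π / 2)) + B * Real.log β := by
    simp only [hΦdef, hNdef]
    rw [show (-β) / β = -1 by field_simp, Real.arcsin_neg, Real.arcsin_one]
    rw [show β ^ 2 - (-β) ^ 2 = 0 by ring, Real.sqrt_zero, mul_zero, add_zero]
    rw [show (β ^ 2 - s * -β) / (s - -β) = β by
      rw [div_eq_iff (by intro h; apply absurd h; intro h2; nlinarith)]; ring]
    ring
  have hΦb : Φ β = s * (π / 2) + B * Real.log β := by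
    simp only [hΦdef, hNdef]
    rw [show β / β = 1 by field_simp, Real.arcsin_one]
    rw [show β ^ 2 - β ^ 2 = 0 by ring, Real.sqrt_zero, mul_zero, add_zero]
    rw [show (β ^ 2 - s * β) / (s - β) = -β by
      rw [div_eq_iff (by intro h; apply absurd h; intro h2; nlinarith)]; ring]
    rw [Real.log_neg_eq_log]
    ring
  set ψ : ℝ → ℝ := fun y => s * Real.arcsin (y / β) - Real.sqrt (β ^ 2 - y ^ 2)
    + B * Real.log (N y) with hψdef
  set G : ℝ → ℝ := fun ε => ψ (s - ε) - ψ (s + ε) with hGdef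
  have hNs : N s ≠ 0 := (hNpos s ⟨hs1.le, hs2.le⟩).ne'
  have hψ : ContinuousAt ψ s := by
    apply ContinuousAt.add
    · exact (continuousAt_const.mul
        ((Real.continuous_arcsin.comp (continuous_id.div_const β)).continuousAt)).sub
        ((Real.continuous_sqrt.comp (by continuity)).continuousAt)
    · exact continuousAt_const.mul (ContinuousAt.log hNcont.continuousAt hNs)
  have hGcont : ContinuousAt G 0 := by
    have hψ1 : ContinuousAt ψ (s - 0) := by rw [sub_zero]; exact hψ
    have hψ2 : ContinuousAt ψ (s + 0) := by rw [add_zero]; exact hψ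
    have c1 : ContinuousAt (fun ε : ℝ => ψ (s - ε)) 0 :=
      ContinuousAt.comp hψ1 ((continuous_const.sub continuous_id).continuousAt)
    have c2 : ContinuousAt (fun ε : ℝ => ψ (s + ε)) 0 :=
      ContinuousAt.comp hψ2 ((continuous_const.add continuous_id).continuousAt)
    exact c1.sub c2
  have hG0 : G 0 = 0 := by simp [hGdef]
  have hδ : 0 < min (β - s) (s + β) := by
    apply lt_min <;> linarith
  have hev : ∀ ε ∈ Set.Ioo (0:ℝ) (min (β - s) (s + β)),
      ((∫ t in (-β)..(s - ε), Real.sqrt (β ^ 2 - t ^ 2) / (s - t)) +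
        (∫ t in (s + ε)..β, Real.sqrt (β ^ 2 - t ^ 2) / (s - t)))
      = π * s + G ε := by
    intro ε hε
    obtain ⟨hε0, hεδ⟩ := hε
    have hε1 : ε < β - s := lt_of_lt_of_le hεδ (min_le_left _ _)
    have hε2 : ε < s + β := lt_of_lt_of_le hεδ (min_le_right _ _)
    have hI1 : (∫ t in (-β)..(s - ε), Real.sqrt (β ^ 2 - t ^ 2) / (s - t))
        = Φ (s - ε) - Φ (-β) := by
      apply intervalIntegral.integral_eq_sub_of_hasDerivAt_of_tendsto
        (by linarith)
        (fun t ht => hΦderiv t ⟨ht.1, by linarith [ht.2]⟩ (by linarith [ht.2]))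
      · apply ContinuousOn.intervalIntegrable
        apply ContinuousOn.div
        · exact (Real.continuous_sqrt.comp (by continuity)).continuousOn
        · exact (continuous_const.sub continuous_id).continuousOn
        · intro x hx
          rw [Set.uIcc_of_le (by linarith)] at hx
          have := hx.2
          intro h; nlinarith
      · exact ((hΦAt (-β) ⟨le_refl _, by linarith⟩ (by intro h; nlinarith)).tendsto).mono_left
          nhdsWithin_le_nhds
      · exact ((hΦAt (s - ε) ⟨by linarith, by linarith⟩ (by intro h; nlinarith)).tendsto).mono_left
          nhdsWithin_le_nhds
    have hI2 : (∫ t in (s + ε)..β, Real.sqrt (β ^ 2 - t ^ 2) / (s - t))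
        = Φ β - Φ (s + ε) := by
      apply intervalIntegral.integral_eq_sub_of_hasDerivAt_of_tendsto
        (by linarith)
        (fun t ht => hΦderiv t ⟨by linarith [ht.1], ht.2⟩ (by intro h; subst h; linarith [ht.1]))
      · apply ContinuousOn.intervalIntegrable
        apply ContinuousOn.div
        · exact (Real.continuous_sqrt.comp (by continuity)).continuousOn
        · exact (continuous_const.sub continuous_id).continuousOn
        · intro x hx
          rw [Set.uIcc_of_le (by linarith)] at hx
          have := hx.1
          intro h; nlinarith
      · exact ((hΦAt (s + ε) ⟨by linarith, by linarith⟩ (by intro h; nlinarith)).tendsto).mono_left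
          nhdsWithin_le_nhds
      · exact ((hΦAt β ⟨by linarith, le_refl _⟩ (by intro h; nlinarith)).tendsto).mono_left
          nhdsWithin_le_nhds
    rw [hI1, hI2, hΦa, hΦb]
    have hlog1 : Real.log (N (s - ε) / (s - (s - ε)))
        = Real.log (N (s - ε)) - Real.log ε := by
      rw [show s - (s - ε) = ε by ring,
        Real.log_div (hNpos _ ⟨by linarith, by linarith⟩).ne' hε0.ne']
    have hlog2 : Real.log (N (s + ε) / (s - (s + ε)))
        = Real.log (N (s + ε)) - Real.log ε := by
      rw [show s - (s + ε) = -ε by ring, div_neg, Real.log_neg_eq_log,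
        Real.log_div (hNpos _ ⟨by linarith, by linarith⟩).ne' hε0.ne']
    simp only [hΦdef, hGdef, hψdef]
    rw [hlog1, hlog2]
    ring
  have htend : Filter.Tendsto (fun ε => π * s + G ε)
      (nhdsWithin 0 (Set.Ioi 0)) (nhds (π * s)) := by
    have : Filter.Tendsto (fun ε => π * s + G ε) (nhds 0) (nhds (π * s + G 0)) :=
      (continuousAt_const.add hGcont).tendsto
    rw [hG0, add_zero] at this
    exact this.mono_left nhdsWithin_le_nhds
  apply htend.congr'
  filter_upwards [Ioo_mem_nhdsGT_of_mem (Set.left_mem_Ico.mpr hδ)] with ε hε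
  exact (hev ε hε).symm

theorem hilbert_transform_semicircle_kernel (β : ℝ) (hβ0 : 0 < β)
    (hβ1 : β < Real.sqrt 2 / 2) :
    (∀ s : ℝ, β < |s| → |s| ≤ Real.sqrt 2 / 2 →
      (∫ t in (-β)..β, Real.sqrt (β ^ 2 - t ^ 2) / (s - t))
        = π * Real.sign s * (|s| - Real.sqrt (s ^ 2 - β ^ 2))) ∧
    (∀ s : ℝ, |s| < β →
      Filter.Tendsto (fun ε : ℝ =>
          (∫ t in (-β)..(s - ε), Real.sqrt (β ^ 2 - t ^ 2) / (s - t)) +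
          (∫ t in (s + ε)..β, Real.sqrt (β ^ 2 - t ^ 2) / (s - t)))
        (nhdsWithin 0 (Set.Ioi 0)) (nhds (π * s))) := by
  constructor
  · intro s hs _
    exact part1_all hβ0 hs
  · intro s hs
    exact part2 hβ0 hs
end

section
/- Let γ ≥ 1 and ξ ∈ [−1, 1]. Then ∫_{−1}^{ξ} arctan(sqrt((γ−1)(1+η)/((γ+1)(1−η)))) dη = (ξ−γ)·arctan(sqrt((γ−1)(1+ξ)/((γ+1)(1−ξ)))) + (sqrt(γ²−1)/2)·(arcsin(ξ) + π/2). -/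
open Real intervalIntegral

private lemma key1 {γ η : ℝ} (hγ : 1 < γ) (hη : -1 ≤ η) (hη1 : η < 1) :
    Real.arctan (Real.sqrt ((γ - 1) * (1 + η) / ((γ + 1) * (1 - η))))
      = Real.arccos (Real.sqrt ((γ + 1) * (1 - η) / (2 * (γ - η)))) := by
  have hγη : 0 < γ - η := by linarith
  have hγ1 : 0 < γ + 1 := by linarith
  have h1η : 0 < 1 - η := by linarith
  set t := (γ + 1) * (1 - η) / (2 * (γ - η)) with ht
  have ht0 : 0 < t := by positivity
  have ht1 : t ≤ 1 := by
    rw [ht, div_le_one (by positivity)]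
    nlinarith
  have hs : 0 < Real.sqrt t := Real.sqrt_pos.mpr ht0
  have htan : Real.tan (Real.arccos (Real.sqrt t)) = Real.sqrt (1 - t) / Real.sqrt t := by
    rw [Real.tan_arccos, Real.sq_sqrt ht0.le]
  have hdiv : Real.sqrt (1 - t) / Real.sqrt t = Real.sqrt ((1 - t) / t) :=
    (Real.sqrt_div (by linarith) t).symm
  have hrat : (1 - t) / t = (γ - 1) * (1 + η) / ((γ + 1) * (1 - η)) := by
    rw [ht]
    field_simp
    ring
  rw [← hrat, ← hdiv, ← htan, Real.arctan_tan]
  · linarith [Real.arccos_nonneg (Real.sqrt t), Real.pi_pos]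
  · exact Real.arccos_lt_pi_div_two.mpr hs

private lemma key2 {γ η : ℝ} (hγ : 1 < γ) (hη : -1 < η) (hη1 : η < 1) :
    HasDerivAt (fun y => (y - γ) * Real.arctan (Real.sqrt ((γ - 1) * (1 + y) / ((γ + 1) * (1 - y))))
        + (Real.sqrt (γ ^ 2 - 1) / 2) * (Real.arcsin y + π / 2))
      (Real.arctan (Real.sqrt ((γ - 1) * (1 + η) / ((γ + 1) * (1 - η))))) η := by
  have hγ1 : 0 < γ + 1 := by linarith
  have hγm : 0 < γ - 1 := by linarith
  have h1η : 0 < 1 - η := by linarith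
  have hη1' : 0 < 1 + η := by linarith
  have hγη : 0 < γ - η := by linarith
  have hD0 : (γ + 1) * (1 - η) ≠ 0 := by positivity
  have hu0 : 0 < (γ - 1) * (1 + η) / ((γ + 1) * (1 - η)) := by positivity
  have hN : HasDerivAt (fun y : ℝ => (γ - 1) * (1 + y)) (γ - 1) η := by
    simpa using ((hasDerivAt_const η (1:ℝ)).add (hasDerivAt_id η)).const_mul (γ - 1)
  have hDm : HasDerivAt (fun y : ℝ => (γ + 1) * (1 - y)) (-(γ + 1)) η := by
    simpa using ((hasDerivAt_const η (1:ℝ)).sub (hasDerivAt_id η)).const_mul (γ + 1)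
  have hu : HasDerivAt (fun y : ℝ => (γ - 1) * (1 + y) / ((γ + 1) * (1 - y)))
      (((γ - 1) * ((γ + 1) * (1 - η)) - (γ - 1) * (1 + η) * (-(γ + 1))) / ((γ + 1) * (1 - η)) ^ 2)
      η := hN.div hDm hD0
  have hsq := hu.sqrt hu0.ne'
  have harc := hsq.arctan
  have hId : HasDerivAt (fun y : ℝ => y - γ) 1 η := by
    simpa using (hasDerivAt_id η).sub_const γ
  have hprod := hId.mul harc
  have harcsin := ((Real.hasDerivAt_arcsin (x := η) (by linarith) (by linarith)).add_const
      (π / 2)).const_mul (Real.sqrt (γ ^ 2 - 1) / 2)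
  have htot := hprod.add harcsin
  refine htot.congr_deriv ?_
  set a := Real.sqrt (γ - 1)
  set b := Real.sqrt (γ + 1)
  set p := Real.sqrt (1 + η)
  set q := Real.sqrt (1 - η)
  have ha : 0 < a := Real.sqrt_pos.mpr hγm
  have hb : 0 < b := Real.sqrt_pos.mpr hγ1
  have hp : 0 < p := Real.sqrt_pos.mpr hη1'
  have hq : 0 < q := Real.sqrt_pos.mpr h1η
  have ha2 : a ^ 2 = γ - 1 := Real.sq_sqrt hγm.le
  have hb2 : b ^ 2 = γ + 1 := Real.sq_sqrt hγ1.le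
  have hp2 : p ^ 2 = 1 + η := Real.sq_sqrt hη1'.le
  have hq2 : q ^ 2 = 1 - η := Real.sq_sqrt h1η.le
  have hsu : Real.sqrt ((γ - 1) * (1 + η) / ((γ + 1) * (1 - η))) = a * p / (b * q) := by
    rw [Real.sqrt_div (by positivity), Real.sqrt_mul hγm.le, Real.sqrt_mul hγ1.le]
  have hsg : Real.sqrt (γ ^ 2 - 1) = a * b := by
    rw [show γ ^ 2 - 1 = (γ - 1) * (γ + 1) by ring, Real.sqrt_mul hγm.le]
  have hse : Real.sqrt (1 - η ^ 2) = p * q := by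
    rw [show 1 - η ^ 2 = (1 + η) * (1 - η) by ring, Real.sqrt_mul hη1'.le]
  rw [hsu, hsg, hse]
  have hsq2 : (a * p / (b * q)) ^ 2 = (γ - 1) * (1 + η) / ((γ + 1) * (1 - η)) := by
    rw [div_pow, mul_pow, mul_pow, ha2, hb2, hp2, hq2]
  rw [hsq2]
  have key : (η - γ) * (1 / (1 + (γ - 1) * (1 + η) / ((γ + 1) * (1 - η))) *
      (((γ - 1) * ((γ + 1) * (1 - η)) - (γ - 1) * (1 + η) * (-(γ + 1))) / ((γ + 1) * (1 - η)) ^ 2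
        / (2 * (a * p / (b * q)))))
      + a * b / 2 * (1 / (p * q)) = 0 := by
    have e1 : 1 + (γ - 1) * (1 + η) / ((γ + 1) * (1 - η)) = 2 * (γ - η) / ((γ + 1) * (1 - η)) := by
      field_simp; ring
    rw [e1]
    field_simp
    linear_combination (2*b*(γ-η)*(1-η)) * ha2 + (2*b*(η-γ)*(γ-1)) * hq2
  linarith [key]

theorem arctan_radical_antiderivative (γ ξ : ℝ) (hγ : 1 ≤ γ)
    (hξ : ξ ∈ Set.Icc (-1 : ℝ) 1) (A : ℝ)
    (hA1 : ξ < 1 → A = Real.arctan (Real.sqrt ((γ - 1) * (1 + ξ) / ((γ + 1) * (1 - ξ)))))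
    (hA2 : ξ = 1 → A = π / 2) :
    (∫ η in (-1 : ℝ)..ξ, Real.arctan (Real.sqrt ((γ - 1) * (1 + η) / ((γ + 1) * (1 - η)))))
      = (ξ - γ) * A + (Real.sqrt (γ ^ 2 - 1) / 2) * (Real.arcsin ξ + π / 2) := by
  obtain ⟨hξl, hξu⟩ := hξ
  rcases eq_or_lt_of_le hγ with hγ1 | hγ1
  · -- γ = 1
    subst hγ1
    have hz : ∀ y : ℝ, Real.arctan (Real.sqrt ((1 - 1) * (1 + y) / ((1 + 1) * (1 - y)))) = 0 := by
      intro y; norm_num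
    simp only [hz]
    rw [intervalIntegral.integral_zero]
    have hs0 : Real.sqrt ((1:ℝ) ^ 2 - 1) = 0 := by norm_num
    rcases lt_or_eq_of_le hξu with h | h
    · rw [hA1 h, hz ξ, hs0]; ring
    · rw [h, hs0]; ring
  · -- 1 < γ
    have hGcont : ContinuousOn
        (fun y => Real.arccos (Real.sqrt ((γ + 1) * (1 - y) / (2 * (γ - y)))))
        (Set.Icc (-1 : ℝ) 1) := by
      apply Real.continuous_arccos.comp_continuousOn
      apply Real.continuous_sqrt.comp_continuousOn
      apply ContinuousOn.div (by fun_prop) (by fun_prop)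
      intro x hx
      have := hx.2
      have : 0 < γ - x := by linarith
      positivity
    have hIccsub : Set.Icc (-1 : ℝ) ξ ⊆ Set.Icc (-1 : ℝ) 1 := Set.Icc_subset_Icc le_rfl hξu
    -- Step 1: replace integrand by the arccos form a.e.
    have hae : ∀ᵐ x : ℝ, x ≠ (1 : ℝ) := by
      rw [MeasureTheory.ae_iff]
      simp [not_not, Set.setOf_eq_eq_singleton]
    have hstep1 :
        (∫ η in (-1 : ℝ)..ξ, Real.arctan (Real.sqrt ((γ - 1) * (1 + η) / ((γ + 1) * (1 - η)))))
          = ∫ η in (-1 : ℝ)..ξ, Real.arccos (Real.sqrt ((γ + 1) * (1 - η) / (2 * (γ - η)))) := by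
      apply intervalIntegral.integral_congr_ae
      filter_upwards [hae] with x hx hmem
      rw [Set.uIoc_of_le hξl] at hmem
      exact key1 hγ1 hmem.1.le (lt_of_le_of_ne (le_trans hmem.2 hξu) hx)
    rw [hstep1]
    -- Step 2: FTC
    set F : ℝ → ℝ := fun y =>
      (y - γ) * Real.arccos (Real.sqrt ((γ + 1) * (1 - y) / (2 * (γ - y))))
        + (Real.sqrt (γ ^ 2 - 1) / 2) * (Real.arcsin y + π / 2) with hF
    have hstep2 :
        (∫ η in (-1 : ℝ)..ξ, Real.arccos (Real.sqrt ((γ + 1) * (1 - η) / (2 * (γ - η)))))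
          = F ξ - F (-1) := by
      apply intervalIntegral.integral_eq_sub_of_hasDerivAt_of_le hξl
      · exact ((continuousOn_id.sub continuousOn_const).mul (hGcont.mono hIccsub)).add
          ((continuous_const.mul (Real.continuous_arcsin.add continuous_const) :
            Continuous fun y => Real.sqrt (γ ^ 2 - 1) / 2 * (Real.arcsin y + π / 2)).continuousOn)
      · intro x hx
        have hx1 : -1 < x := hx.1
        have hx2 : x < 1 := lt_of_lt_of_le hx.2 hξu
        have hder := key2 hγ1 hx1 hx2
        have hev : F =ᶠ[nhds x]
            (fun y => (y - γ) * Real.arctan (Real.sqrt ((γ - 1) * (1 + y) / ((γ + 1) * (1 - y))))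
              + (Real.sqrt (γ ^ 2 - 1) / 2) * (Real.arcsin y + π / 2)) := by
          filter_upwards [isOpen_Ioo.mem_nhds (show x ∈ Set.Ioo (-1 : ℝ) 1 from ⟨hx1, hx2⟩)]
            with y hy
          rw [hF]
          simp only
          rw [key1 hγ1 hy.1.le hy.2]
        have := hder.congr_of_eventuallyEq hev
        rwa [key1 hγ1 hx1.le hx2] at this
      · exact ((hGcont.mono (by rw [Set.uIcc_of_le hξl]; exact hIccsub)).intervalIntegrable)
    rw [hstep2]
    -- Step 3: endpoint values
    have hFneg : F (-1) = 0 := by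
      rw [hF]
      simp only
      have h1 : (γ + 1) * (1 - (-1)) / (2 * (γ - (-1))) = 1 := by
        rw [div_eq_one_iff_eq (by intro h; linarith)]
        ring
      rw [h1, Real.sqrt_one, Real.arccos_one, Real.arcsin_neg_one]
      ring
    have hFξ : F ξ = (ξ - γ) * A + (Real.sqrt (γ ^ 2 - 1) / 2) * (Real.arcsin ξ + π / 2) := by
      rcases lt_or_eq_of_le hξu with h | h
      · rw [hF]; simp only
        rw [← key1 hγ1 hξl h, ← hA1 h]
      · rw [hF]; simp only
        rw [hA2 h, h]
        have h0 : (γ + 1) * (1 - 1) / (2 * (γ - 1)) = 0 := by norm_num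
        rw [h0, Real.sqrt_zero, Real.arccos_zero]
    rw [hFneg, hFξ]
    ring
end

section
/- For γ ≥ 1, ∫_{−1}^{1} η·arctan(sqrt((1+η)(γ−1)/((1−η)(γ+1)))) dη = (π/4)·(1 − γ² + γ·sqrt(γ²−1)). -/
open Real intervalIntegral

set_option maxHeartbeats 1000000 in

theorem arctan_radical_moment_integral (γ : ℝ) (hγ : 1 ≤ γ) :
    (∫ η in (-1 : ℝ)..1, η * Real.arctan (Real.sqrt ((1 + η) * (γ - 1) / ((1 - η) * (γ + 1)))))
      = (π / 4) * (1 - γ ^ 2 + γ * Real.sqrt (γ ^ 2 - 1)) := by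
  rcases eq_or_lt_of_le hγ with h1 | hγ'
  · subst h1
    norm_num
  -- main case: 1 < γ
  set s : ℝ := Real.sqrt (γ ^ 2 - 1) with hs_def
  have hs2 : s ^ 2 = γ ^ 2 - 1 := Real.sq_sqrt (by nlinarith)
  have hs : 0 < s := Real.sqrt_pos.mpr (by nlinarith)
  set F : ℝ → ℝ := fun x =>
    (x ^ 2 - γ ^ 2) / 4 * Real.arccos ((1 - γ * x) / (γ - x))
      + s * γ / 4 * Real.arcsin x - s / 4 * Real.sqrt (1 - x ^ 2) with hF_def
  set G : ℝ → ℝ := fun x => x / 2 * Real.arccos ((1 - γ * x) / (γ - x)) with hG_def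
  -- denominator positivity on Icc
  have hden : ∀ x : ℝ, x ≤ 1 → 0 < γ - x := fun x hx => by linarith
  -- continuity of F on Icc
  have hFcont : ContinuousOn F (Set.Icc (-1 : ℝ) 1) := by
    apply ContinuousOn.sub
    apply ContinuousOn.add
    · exact (continuousOn_id.pow 2 |>.sub continuousOn_const |>.div_const 4).mul
        (Real.continuous_arccos.comp_continuousOn
          ((continuousOn_const.sub (continuousOn_const.mul continuousOn_id)).div
            (continuousOn_const.sub continuousOn_id)
            (fun x hx => (hden x hx.2).ne')))
    · exact continuousOn_const.mul (Real.continuous_arcsin.continuousOn)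
    · exact continuousOn_const.mul
        ((continuous_const.sub (continuous_pow 2)).sqrt.continuousOn)
  -- key identity: arccos u = 2 arctan sqrt(...) on Ioo
  have hid : ∀ x ∈ Set.Ioo (-1 : ℝ) 1,
      x * Real.arctan (Real.sqrt ((1 + x) * (γ - 1) / ((1 - x) * (γ + 1)))) = G x := by
    intro x hx
    obtain ⟨hx1, hx2⟩ := hx
    have h1x : (0:ℝ) < 1 - x := by linarith
    have h1x' : (0:ℝ) < 1 + x := by linarith
    have hd : 0 < γ - x := by linarith
    have hxx : (0:ℝ) < 1 - x ^ 2 := by nlinarith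
    have hg1 : (0:ℝ) < γ ^ 2 - 1 := by nlinarith
    have hkey2 : (γ - x) ^ 2 - (1 - γ * x) ^ 2 = (γ ^ 2 - 1) * (1 - x ^ 2) := by ring
    have hr0 : 0 ≤ (1 + x) * (γ - 1) / ((1 - x) * (γ + 1)) :=
      div_nonneg (by nlinarith) (by positivity)
    set g : ℝ := Real.sqrt ((1 + x) * (γ - 1) / ((1 - x) * (γ + 1))) with hg_def
    have hg2 : g ^ 2 = (1 + x) * (γ - 1) / ((1 - x) * (γ + 1)) := Real.sq_sqrt hr0
    have hkey : Real.arccos ((1 - γ * x) / (γ - x)) = 2 * Real.arctan g := by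
      have humem : ((1 - γ * x) / (γ - x)) ^ 2 ≤ 1 := by
        rw [div_pow, div_le_one (by positivity)]
        nlinarith [mul_pos hg1 hxx]
      have hu1 : -1 ≤ (1 - γ * x) / (γ - x) := by
        nlinarith [sq_nonneg ((1 - γ * x) / (γ - x) + 1)]
      have hu2 : (1 - γ * x) / (γ - x) ≤ 1 := by
        nlinarith [sq_nonneg ((1 - γ * x) / (γ - x) - 1)]
      have hat0 : 0 ≤ Real.arctan g := by
        simpa [hg_def] using Real.arctan_strictMono.monotone (Real.sqrt_nonneg
          ((1 + x) * (γ - 1) / ((1 - x) * (γ + 1))))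
      apply Real.injOn_cos
      · exact ⟨Real.arccos_nonneg _, Real.arccos_le_pi _⟩
      · constructor
        · positivity
        · nlinarith [Real.arctan_lt_pi_div_two g]
      have hd0 : γ - x ≠ 0 := hd.ne'
      have hd1 : (1 - x) * (γ + 1) ≠ 0 := by positivity
      rw [Real.cos_arccos hu1 hu2, Real.cos_two_mul, Real.cos_sq_arctan, hg2,
        show 1 + (1 + x) * (γ - 1) / ((1 - x) * (γ + 1))
          = 2 * (γ - x) / ((1 - x) * (γ + 1)) by field_simp; ring]
      field_simp
      ring
    simp only [hG_def, hkey]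
    ring
  -- derivative of F on Ioo
  have hFderiv : ∀ x ∈ Set.Ioo (-1 : ℝ) 1, HasDerivAt F (G x) x := by
    intro x hx
    obtain ⟨hx1, hx2⟩ := hx
    have h1x : (0:ℝ) < 1 - x := by linarith
    have h1x' : (0:ℝ) < 1 + x := by linarith
    have hd : 0 < γ - x := by linarith
    have hxx : (0:ℝ) < 1 - x ^ 2 := by nlinarith
    have hsq : 0 < Real.sqrt (1 - x ^ 2) := Real.sqrt_pos.mpr hxx
    -- u and its derivative
    have hu : HasDerivAt (fun y : ℝ => (1 - γ * y) / (γ - y))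
        ((1 - γ ^ 2) / (γ - x) ^ 2) x := by
      have h1 : HasDerivAt (fun y : ℝ => 1 - γ * y) (-γ) x := by
        simpa using ((hasDerivAt_id x).const_mul γ).const_sub 1
      have h2 : HasDerivAt (fun y : ℝ => γ - y) (-1) x := by
        simpa using (hasDerivAt_id x).const_sub γ
      have := h1.div h2 hd.ne'
      refine this.congr_deriv ?_
      ring
    -- u is strictly inside (-1,1)
    have hg1 : (0:ℝ) < γ ^ 2 - 1 := by nlinarith
    have hult : ((1 - γ * x) / (γ - x)) ^ 2 < 1 := by
      rw [div_pow, div_lt_one (by positivity)]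
      nlinarith [mul_pos hg1 hxx]
    have hune1 : (1 - γ * x) / (γ - x) ≠ 1 := by
      intro h; rw [h] at hult; norm_num at hult
    have hune1' : (1 - γ * x) / (γ - x) ≠ -1 := by
      intro h; rw [h] at hult; norm_num at hult
    have harccos := (Real.hasDerivAt_arccos hune1' hune1).comp x hu
    -- simplify sqrt(1 - u^2)
    have hd0 : γ - x ≠ 0 := hd.ne'
    have hsqrtu : Real.sqrt (1 - ((1 - γ * x) / (γ - x)) ^ 2)
        = s * Real.sqrt (1 - x ^ 2) / (γ - x) := by
      have h1 : 1 - ((1 - γ * x) / (γ - x)) ^ 2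
          = (γ ^ 2 - 1) * (1 - x ^ 2) / (γ - x) ^ 2 := by
        field_simp
        ring
      have h2 : (s * Real.sqrt (1 - x ^ 2) / (γ - x)) ^ 2
          = s ^ 2 * Real.sqrt (1 - x ^ 2) ^ 2 / (γ - x) ^ 2 := by
        rw [div_pow, mul_pow]
      have h3 : (s * Real.sqrt (1 - x ^ 2) / (γ - x)) ^ 2
          = (γ ^ 2 - 1) * (1 - x ^ 2) / (γ - x) ^ 2 := by
        rw [h2, hs2, Real.sq_sqrt hxx.le]
      rw [h1, ← h3, Real.sqrt_sq (by positivity)]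
    -- assemble derivative
    have ht1 : HasDerivAt (fun y : ℝ => (y ^ 2 - γ ^ 2) / 4) (x / 2) x := by
      have := ((hasDerivAt_pow 2 x).sub_const (γ ^ 2)).div_const 4
      refine this.congr_deriv ?_
      push_cast
      ring
    have htA : HasDerivAt (fun y : ℝ =>
        (y ^ 2 - γ ^ 2) / 4 * Real.arccos ((1 - γ * y) / (γ - y)))
        (x / 2 * Real.arccos ((1 - γ * x) / (γ - x))
          + (x ^ 2 - γ ^ 2) / 4
            * (-(1 / Real.sqrt (1 - ((1 - γ * x) / (γ - x)) ^ 2))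
              * ((1 - γ ^ 2) / (γ - x) ^ 2))) x := ht1.mul harccos
    have ht2 : HasDerivAt (fun y : ℝ => s * γ / 4 * Real.arcsin y)
        (s * γ / 4 * (1 / Real.sqrt (1 - x ^ 2))) x :=
      (Real.hasDerivAt_arcsin (by linarith) (by linarith)).const_mul (s * γ / 4)
    have ht3 : HasDerivAt (fun y : ℝ => s / 4 * Real.sqrt (1 - y ^ 2))
        (s / 4 * (-(2 * x) / (2 * Real.sqrt (1 - x ^ 2)))) x := by
      have hinner : HasDerivAt (fun y : ℝ => 1 - y ^ 2) (-(2 * x)) x := by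
        simpa using (hasDerivAt_pow 2 x).const_sub 1
      have := (hinner.sqrt hxx.ne').const_mul (s / 4)
      simpa using this
    have hD := (htA.add ht2).sub ht3
    have hzero : (x ^ 2 - γ ^ 2) / 4
          * (-(1 / Real.sqrt (1 - ((1 - γ * x) / (γ - x)) ^ 2))
            * ((1 - γ ^ 2) / (γ - x) ^ 2))
        + s * γ / 4 * (1 / Real.sqrt (1 - x ^ 2))
        - s / 4 * (-(2 * x) / (2 * Real.sqrt (1 - x ^ 2))) = 0 := by
      rw [hsqrtu, show (1:ℝ) - γ ^ 2 = -(s ^ 2) by rw [hs2]; ring]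
      have hs0 : s ≠ 0 := hs.ne'
      have hsq0 : Real.sqrt (1 - x ^ 2) ≠ 0 := hsq.ne'
      field_simp
      ring
    have hval : (x / 2 * Real.arccos ((1 - γ * x) / (γ - x))
          + (x ^ 2 - γ ^ 2) / 4
            * (-(1 / Real.sqrt (1 - ((1 - γ * x) / (γ - x)) ^ 2))
              * ((1 - γ ^ 2) / (γ - x) ^ 2)))
        + s * γ / 4 * (1 / Real.sqrt (1 - x ^ 2))
        - s / 4 * (-(2 * x) / (2 * Real.sqrt (1 - x ^ 2)))
        = G x := by
      simp only [hG_def]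
      linarith [hzero]
    rw [hF_def]
    exact hval ▸ hD
  -- integrability of G
  have hGint : IntervalIntegrable G MeasureTheory.volume (-1 : ℝ) 1 := by
    apply ContinuousOn.intervalIntegrable
    rw [Set.uIcc_of_le (by norm_num : (-1:ℝ) ≤ 1)]
    exact (continuousOn_id.div_const 2).mul
      (Real.continuous_arccos.comp_continuousOn
        ((continuousOn_const.sub (continuousOn_const.mul continuousOn_id)).div
          (continuousOn_const.sub continuousOn_id)
          (fun x hx => (hden x hx.2).ne')))
  -- replace integrand by G
  have hcongr : (∫ η in (-1 : ℝ)..1,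
      η * Real.arctan (Real.sqrt ((1 + η) * (γ - 1) / ((1 - η) * (γ + 1)))))
      = ∫ η in (-1 : ℝ)..1, G η := by
    apply intervalIntegral.integral_congr_ae
    have hne : ∀ᵐ x : ℝ ∂MeasureTheory.volume, x ≠ 1 := by
      rw [MeasureTheory.ae_iff, show {x : ℝ | ¬ x ≠ 1} = {1} by ext; simp]
      exact Real.volume_singleton
    filter_upwards [hne] with x hx hmem
    rw [Set.uIoc_of_le (by norm_num : (-1:ℝ) ≤ 1)] at hmem
    exact hid x ⟨hmem.1, lt_of_le_of_ne hmem.2 hx⟩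
  rw [hcongr,
    intervalIntegral.integral_eq_sub_of_hasDerivAt_of_le (by norm_num) hFcont hFderiv hGint]
  -- evaluate endpoints
  have he1 : (1 - γ * 1) / (γ - 1) = -1 := by
    rw [div_eq_iff (by linarith : γ - (1:ℝ) ≠ 0)]; ring
  have he2 : (1 - γ * (-1)) / (γ - (-1)) = 1 := by
    rw [div_eq_iff (by linarith : γ - (-1:ℝ) ≠ 0)]; ring
  rw [hF_def]
  simp only [he1, he2]
  rw [Real.arccos_neg_one, Real.arccos_one, Real.arcsin_one, Real.arcsin_neg_one]
  norm_num
  ring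
end

section
/- Fix 0 < θ ≤ 1 and 0 < α ≤ θ/(1+θ), and set γ₁ = (α + θ(1−α))/(2·sqrt(θα(1−α))), γ₂ = (θα + 1−α)/(2·sqrt(θα(1−α))). Then sqrt(γ₁²−1) = (−(1+θ²)γ₁ + 2θγ₂)/(1−θ²) and sqrt(γ₂²−1) = (−2θγ₁ + (1+θ²)γ₂)/(1−θ²), provided θ < 1. -/
open Real

theorem rectangular_gamma_radical_identities (θ α : ℝ) (hθ0 : 0 < θ) (hθ1 : θ ≤ 1)
    (hθlt : θ < 1) (hα0 : 0 < α) (hα1 : α ≤ θ / (1 + θ)) :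
    let γ₁ := (α + θ * (1 - α)) / (2 * Real.sqrt (θ * α * (1 - α)))
    let γ₂ := (θ * α + 1 - α) / (2 * Real.sqrt (θ * α * (1 - α)))
    (Real.sqrt (γ₁ ^ 2 - 1) = (-(1 + θ ^ 2) * γ₁ + 2 * θ * γ₂) / (1 - θ ^ 2) ∧
     Real.sqrt (γ₂ ^ 2 - 1) = (-(2 * θ) * γ₁ + (1 + θ ^ 2) * γ₂) / (1 - θ ^ 2)) := by
  intro γ₁ γ₂
  have h1θ : (0:ℝ) < 1 + θ := by linarith
  have hkey : α * (1 + θ) ≤ θ := (le_div_iff₀ h1θ).mp hα1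
  have hα1' : α < 1 := by nlinarith
  have hpos : 0 < θ * α * (1 - α) := by nlinarith
  set s := Real.sqrt (θ * α * (1 - α)) with hs_def
  have hs : 0 < s := Real.sqrt_pos.mpr hpos
  have hs2 : s ^ 2 = θ * α * (1 - α) := Real.sq_sqrt hpos.le
  have h1 : θ * (1 - α) - α ≥ 0 := by nlinarith
  have h2 : (1 - α) - θ * α ≥ 0 := by nlinarith
  have hθ2 : (0:ℝ) < 1 - θ ^ 2 := by nlinarith
  constructor
  · have e1 : γ₁ ^ 2 - 1 = ((θ * (1 - α) - α) / (2 * s)) ^ 2 := by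
      show ((α + θ * (1 - α)) / (2 * s)) ^ 2 - 1 = _
      field_simp
      nlinarith [hs2]
    rw [e1, Real.sqrt_sq (by positivity)]
    show _ = (-(1 + θ ^ 2) * ((α + θ * (1 - α)) / (2 * s)) +
        2 * θ * ((θ * α + 1 - α) / (2 * s))) / (1 - θ ^ 2)
    field_simp
    ring
  · have e2 : γ₂ ^ 2 - 1 = (((1 - α) - θ * α) / (2 * s)) ^ 2 := by
      show ((θ * α + 1 - α) / (2 * s)) ^ 2 - 1 = _
      field_simp
      nlinarith [hs2]
    rw [e2, Real.sqrt_sq (by positivity)]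
    show _ = (-(2 * θ) * ((α + θ * (1 - α)) / (2 * s)) +
        (1 + θ ^ 2) * ((θ * α + 1 - α) / (2 * s))) / (1 - θ ^ 2)
    field_simp
    ring
end

section
/- Fix 0 < θ ≤ 1 and 0 < α < 1, and let γ₁ = (α + θ(1−α))/(2·sqrt(θα(1−α))), γ₂ = (θα + 1−α)/(2·sqrt(θα(1−α))). Then log(γ₁ + sqrt(γ₁²−1)) + log(γ₂ + sqrt(γ₂²−1)) = log((1−α)/α) whenever α ≤ θ/(1+θ). -/
open Real

theorem rectangular_lagrange_multiplier (θ α : ℝ) (hθ0 : 0 < θ) (hθ1 : θ ≤ 1)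
    (hα0 : 0 < α) (hα1 : α < 1) (hαstar : α ≤ θ / (1 + θ)) :
    let γ₁ := (α + θ * (1 - α)) / (2 * Real.sqrt (θ * α * (1 - α)))
    let γ₂ := (θ * α + 1 - α) / (2 * Real.sqrt (θ * α * (1 - α)))
    Real.log (γ₁ + Real.sqrt (γ₁ ^ 2 - 1)) + Real.log (γ₂ + Real.sqrt (γ₂ ^ 2 - 1))
      = Real.log ((1 - α) / α) := by
  intro γ₁ γ₂
  have h1α : 0 < 1 - α := by linarith
  have hprod : 0 < θ * α * (1 - α) := by positivity
  have hs0 : 0 < Real.sqrt (θ * α * (1 - α)) := Real.sqrt_pos.mpr hprod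
  set s := Real.sqrt (θ * α * (1 - α)) with hs
  have hs2 : s ^ 2 = θ * α * (1 - α) := Real.sq_sqrt hprod.le
  have hA : 0 ≤ θ * (1 - α) - α := by
    have : α * (1 + θ) ≤ θ := by
      rw [← le_div_iff₀ (by linarith : (0:ℝ) < 1 + θ)]; exact hαstar
    nlinarith
  have hB : 0 ≤ 1 - α - θ * α := by
    have : α * (1 + θ) ≤ θ := by
      rw [← le_div_iff₀ (by linarith : (0:ℝ) < 1 + θ)]; exact hαstar
    nlinarith
  have e1 : γ₁ ^ 2 - 1 = ((θ * (1 - α) - α) / (2 * s)) ^ 2 := by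
    show ((α + θ * (1 - α)) / (2 * s)) ^ 2 - 1 = _
    field_simp
    nlinarith [hs2]
  have e2 : γ₂ ^ 2 - 1 = ((1 - α - θ * α) / (2 * s)) ^ 2 := by
    show ((θ * α + 1 - α) / (2 * s)) ^ 2 - 1 = _
    field_simp
    nlinarith [hs2]
  have r1 : Real.sqrt (γ₁ ^ 2 - 1) = (θ * (1 - α) - α) / (2 * s) := by
    rw [e1, Real.sqrt_sq (by positivity)]
  have r2 : Real.sqrt (γ₂ ^ 2 - 1) = (1 - α - θ * α) / (2 * s) := by
    rw [e2, Real.sqrt_sq (by positivity)]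
  have g1 : γ₁ + Real.sqrt (γ₁ ^ 2 - 1) = θ * (1 - α) / s := by
    rw [r1]; show (α + θ * (1 - α)) / (2 * s) + _ = _
    field_simp; ring
  have g2 : γ₂ + Real.sqrt (γ₂ ^ 2 - 1) = (1 - α) / s := by
    rw [r2]; show (θ * α + 1 - α) / (2 * s) + _ = _
    field_simp; ring
  rw [g1, g2, ← Real.log_mul (by positivity) (by positivity)]
  congr 1
  rw [div_mul_div_comm]
  rw [div_eq_div_iff (by positivity) (by positivity)]
  nlinarith [hs2]
end

section
/- Let λ be a Young diagram of area j−1 contained in the n×n square with first row of length λ(1) < n, and let next(λ) be λ with one box added to the first row. Then d(λ)·d(□ₙ∖next(λ)) / (d(next(λ))·d(□ₙ∖λ)) = (n² − λ(1)²)/(j·(n² − j + 1)), where d(μ) denotes the number of standard Young tableaux of shape μ and □ₙ∖μ is viewed as a Young diagram from the opposite corner. -/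
open Finset

/-- The cells of the `n × n` square diagram (rows and columns indexed from `0`). -/
def sqDiagram (n : ℕ) : Finset (ℕ × ℕ) := Finset.range n ×ˢ Finset.range n

/-- A finite set of cells is a Young diagram if it is downward closed. -/
def IsDiagram (S : Finset (ℕ × ℕ)) : Prop :=
  ∀ p ∈ S, ∀ q : ℕ × ℕ, q.1 ≤ p.1 → q.2 ≤ p.2 → q ∈ S

/-- `f` is a standard Young tableau of shape `S`: a bijection from the cells of `S`
onto `{1, …, |S|}`, strictly increasing along rows and columns, and `0` off `S`. -/
def IsSYT (S : Finset (ℕ × ℕ)) (f : ℕ × ℕ → ℕ) : Prop :=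
  (∀ p ∉ S, f p = 0) ∧
  Set.BijOn f ↑S (Set.Icc 1 S.card) ∧
  (∀ p ∈ S, ∀ q ∈ S, p.1 ≤ q.1 → p.2 ≤ q.2 → p ≠ q → f p < f q)

/-- The number of standard Young tableaux of shape `S`. -/
noncomputable def sytCount (S : Finset (ℕ × ℕ)) : ℕ :=
  Set.ncard {f : ℕ × ℕ → ℕ | IsSYT S f}

/-- The complement of `S` in the `n × n` square, viewed as a Young diagram from the
opposite corner. -/
def rotComplement (n : ℕ) (S : Finset (ℕ × ℕ)) : Finset (ℕ × ℕ) :=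
  (sqDiagram n \ S).image (fun p => (n - 1 - p.1, n - 1 - p.2))

/-- The length of the first row of `S`. -/
def firstRowLen (S : Finset (ℕ × ℕ)) : ℕ := (S.filter (fun p => p.1 = 0)).card

/-- The diagram obtained from `S` by adding one box at the end of the first row. -/
def nextDiagram (S : Finset (ℕ × ℕ)) : Finset (ℕ × ℕ) :=
  insert (0, firstRowLen S) S

open BigOperators Polynomial

namespace Amus

lemma isSYT_finite (S : Finset (ℕ × ℕ)) : {f : ℕ × ℕ → ℕ | IsSYT S f}.Finite := by
  classical
  have hsub : {f : ℕ × ℕ → ℕ | IsSYT S f} ⊆ Set.range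
      (fun g : ({p // p ∈ S} → Fin (S.card + 1)) =>
        fun p => if h : p ∈ S then (g ⟨p, h⟩ : ℕ) else 0) := by
    intro f hf
    obtain ⟨h0, hbij, -⟩ := hf
    refine ⟨fun p => ⟨f p.1, Nat.lt_succ_of_le (hbij.1 p.2).2⟩, ?_⟩
    funext p
    by_cases hp : p ∈ S
    · simp [hp]
    · simp [hp, h0 p hp]
  exact (Set.finite_range _).subset hsub

lemma sytCount_eq_card (S : Finset (ℕ × ℕ)) :
    sytCount S = (isSYT_finite S).toFinset.card := by
  rw [sytCount, Set.ncard_eq_toFinset_card _ (isSYT_finite S)]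

lemma sytCount_empty : sytCount (∅ : Finset (ℕ × ℕ)) = 1 := by
  have h : {f : ℕ × ℕ → ℕ | IsSYT ∅ f} = {fun _ => 0} := by
    ext f
    simp only [Set.mem_setOf_eq, Set.mem_singleton_iff]
    constructor
    · rintro ⟨h0, -, -⟩
      funext p; exact h0 p (by simp)
    · rintro rfl
      refine ⟨fun _ _ => rfl, ?_, by simp⟩
      have h1 : (↑(∅ : Finset (ℕ × ℕ)) : Set (ℕ × ℕ)) = ∅ := by simp
      have h2 : Set.Icc 1 (∅ : Finset (ℕ × ℕ)).card = (∅ : Set ℕ) := by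
        simp [Set.Icc_eq_empty_of_lt]
      rw [h1, h2]
      exact Set.bijOn_empty _
  rw [sytCount, h, Set.ncard_singleton]

section MaxCell

variable {S : Finset (ℕ × ℕ)} {f : ℕ × ℕ → ℕ} {p : ℕ × ℕ}

lemma max_is_corner (hf : IsSYT S f) (hp : p ∈ S) (hmax : f p = S.card) :
    (p.1 + 1, p.2) ∉ S ∧ (p.1, p.2 + 1) ∉ S := by
  obtain ⟨-, hbij, hmono⟩ := hf
  constructor
  · intro hq
    have h1 : f p < f (p.1 + 1, p.2) := hmono p hp _ hq (by simp) (by simp) (by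
      intro h; exact absurd (congrArg Prod.fst h) (by simp))
    have h2 := (hbij.1 hq).2
    omega
  · intro hq
    have h1 : f p < f (p.1, p.2 + 1) := hmono p hp _ hq (by simp) (by simp) (by
      intro h; exact absurd (congrArg Prod.snd h) (by simp))
    have h2 := (hbij.1 hq).2
    omega

lemma exists_max (hf : IsSYT S f) (hS : S.Nonempty) : ∃ p ∈ S, f p = S.card := by
  have hcard : 1 ≤ S.card := Finset.card_pos.mpr hS
  obtain ⟨p, hp, hfp⟩ := hf.2.1.2.2 (Set.mem_Icc.mpr ⟨hcard, le_rfl⟩)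
  exact ⟨p, hp, hfp⟩

lemma restrict_syt (hf : IsSYT S f) (hp : p ∈ S) (hmax : f p = S.card) :
    IsSYT (S.erase p) (Function.update f p 0) := by
  classical
  obtain ⟨h0, hbij, hmono⟩ := hf
  have hS : S.Nonempty := ⟨p, hp⟩
  have hcard : 1 ≤ S.card := Finset.card_pos.mpr hS
  have hce : (S.erase p).card = S.card - 1 := Finset.card_erase_of_mem hp
  have hne : ∀ q ∈ S, q ≠ p → f q ≠ S.card := by
    intro q hq hqp hfq
    exact hqp (hbij.2.1 (by exact_mod_cast hq) (by exact_mod_cast hp) (hfq.trans hmax.symm))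
  refine ⟨?_, ⟨?_, ?_, ?_⟩, ?_⟩
  · intro q hq
    by_cases hqp : q = p
    · subst hqp; simp
    · rw [Function.update_of_ne hqp]
      exact h0 q (fun hqS => hq (Finset.mem_erase.mpr ⟨hqp, hqS⟩))
  · intro q hq
    simp only [Finset.coe_erase, Set.mem_diff, Set.mem_singleton_iff] at hq
    rw [Function.update_of_ne hq.2]
    have h1 := hbij.1 hq.1
    have h2 := hne q (by exact_mod_cast hq.1) hq.2
    rw [hce]
    exact Set.mem_Icc.mpr ⟨(Set.mem_Icc.mp h1).1, by have := (Set.mem_Icc.mp h1).2; omega⟩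
  · intro q hq q' hq' hqq
    simp only [Finset.coe_erase, Set.mem_diff, Set.mem_singleton_iff] at hq hq'
    rw [Function.update_of_ne hq.2, Function.update_of_ne hq'.2] at hqq
    exact hbij.2.1 hq.1 hq'.1 hqq
  · intro y hy
    rw [hce] at hy
    have hy' : y ∈ Set.Icc 1 S.card := by
      have := Set.mem_Icc.mp hy; exact Set.mem_Icc.mpr ⟨this.1, by omega⟩
    obtain ⟨q, hq, hfq⟩ := hbij.2.2 hy'
    have hqp : q ≠ p := by
      intro h; subst h
      have := (Set.mem_Icc.mp hy).2
      rw [hfq] at hmax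
      omega
    refine ⟨q, ?_, ?_⟩
    · simp only [Finset.coe_erase, Set.mem_diff, Set.mem_singleton_iff]
      exact ⟨hq, hqp⟩
    · rw [Function.update_of_ne hqp]; exact hfq
  · intro q hq q' hq' h1 h2 h3
    have hq2 := Finset.mem_erase.mp hq
    have hq2' := Finset.mem_erase.mp hq'
    rw [Function.update_of_ne hq2.1, Function.update_of_ne hq2'.1]
    exact hmono q hq2.2 q' hq2'.2 h1 h2 h3

lemma extend_syt (hdiag : IsDiagram S) (hp : p ∈ S)
    (hc1 : (p.1 + 1, p.2) ∉ S) (hc2 : (p.1, p.2 + 1) ∉ S)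
    {g : ℕ × ℕ → ℕ} (hg : IsSYT (S.erase p) g) :
    IsSYT S (Function.update g p S.card) := by
  classical
  obtain ⟨h0, hbij, hmono⟩ := hg
  have hS : S.Nonempty := ⟨p, hp⟩
  have hcard : 1 ≤ S.card := Finset.card_pos.mpr hS
  have hce : (S.erase p).card = S.card - 1 := Finset.card_erase_of_mem hp
  have hnotabove : ∀ q ∈ S, p.1 ≤ q.1 → p.2 ≤ q.2 → p ≠ q → False := by
    intro q hq hle1 hle2 hne
    rcases Nat.lt_or_ge p.1 q.1 with h | h
    · exact hc1 (hdiag q hq (p.1 + 1, p.2) (by omega) (by simpa using hle2))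
    · have h1 : p.1 = q.1 := by omega
      have h2 : p.2 < q.2 := by
        rcases Nat.lt_or_ge p.2 q.2 with h' | h'
        · exact h'
        · exfalso; apply hne; exact Prod.ext h1 (by omega)
      exact hc2 (hdiag q hq (p.1, p.2 + 1) (by omega) (by omega))
  have hvalg : ∀ q ∈ S, q ≠ p → g q ∈ Set.Icc 1 (S.card - 1) := by
    intro q hq hqp
    have := hbij.1 (by
      simp only [Finset.coe_erase, Set.mem_diff, Set.mem_singleton_iff]
      exact ⟨by exact_mod_cast hq, hqp⟩)
    rwa [hce] at this
  refine ⟨?_, ⟨?_, ?_, ?_⟩, ?_⟩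
  · intro q hq
    have hqp : q ≠ p := fun h => hq (h ▸ hp)
    rw [Function.update_of_ne hqp]
    exact h0 q (fun hq' => hq (Finset.mem_of_mem_erase hq'))
  · intro q hq
    by_cases hqp : q = p
    · subst hqp; rw [Function.update_self]; exact Set.mem_Icc.mpr ⟨hcard, le_rfl⟩
    · rw [Function.update_of_ne hqp]
      have := hvalg q (by exact_mod_cast hq) hqp
      have := Set.mem_Icc.mp this
      exact Set.mem_Icc.mpr ⟨this.1, by omega⟩
  · intro q hq q' hq' hqq
    by_cases h1 : q = p <;> by_cases h2 : q' = p
    · rw [h1, h2]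
    · exfalso
      rw [h1, Function.update_self, Function.update_of_ne h2] at hqq
      have := Set.mem_Icc.mp (hvalg q' (by exact_mod_cast hq') h2)
      omega
    · exfalso
      rw [h2, Function.update_self, Function.update_of_ne h1] at hqq
      have := Set.mem_Icc.mp (hvalg q (by exact_mod_cast hq) h1)
      omega
    · rw [Function.update_of_ne h1, Function.update_of_ne h2] at hqq
      exact hbij.2.1 (by
        simp only [Finset.coe_erase, Set.mem_diff, Set.mem_singleton_iff]
        exact ⟨hq, h1⟩) (by
        simp only [Finset.coe_erase, Set.mem_diff, Set.mem_singleton_iff]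
        exact ⟨hq', h2⟩) hqq
  · intro y hy
    have hy' := Set.mem_Icc.mp hy
    by_cases hyN : y = S.card
    · exact ⟨p, by exact_mod_cast hp, by rw [Function.update_self, hyN]⟩
    · have : y ∈ Set.Icc 1 (S.erase p).card := by
        rw [hce]; exact Set.mem_Icc.mpr ⟨hy'.1, by omega⟩
      obtain ⟨q, hq, hgq⟩ := hbij.2.2 this
      simp only [Finset.coe_erase, Set.mem_diff, Set.mem_singleton_iff] at hq
      exact ⟨q, hq.1, by rw [Function.update_of_ne hq.2]; exact hgq⟩
  · intro q hq q' hq' hle1 hle2 hne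
    by_cases h1 : q = p
    · exfalso
      subst h1
      exact hnotabove q' hq' hle1 hle2 hne
    · by_cases h2 : q' = p
      · subst h2
        rw [Function.update_of_ne h1, Function.update_self]
        have := Set.mem_Icc.mp (hvalg q hq h1)
        omega
      · rw [Function.update_of_ne h1, Function.update_of_ne h2]
        exact hmono q (Finset.mem_erase.mpr ⟨h1, hq⟩) q' (Finset.mem_erase.mpr ⟨h2, hq'⟩)
          hle1 hle2 hne

end MaxCell

end Amus

namespace Amus

def shape (m : ℕ) (lam : ℕ → ℕ) : Finset (ℕ × ℕ) :=
  (Finset.range m).biUnion (fun r => {r} ×ˢ Finset.range (lam r))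

lemma mem_shape {m : ℕ} {lam : ℕ → ℕ} {p : ℕ × ℕ} :
    p ∈ shape m lam ↔ p.1 < m ∧ p.2 < lam p.1 := by
  simp only [shape, Finset.mem_biUnion, Finset.mem_range, Finset.mem_product,
    Finset.mem_singleton]
  constructor
  · rintro ⟨r, hr, rfl, h2⟩; exact ⟨hr, h2⟩
  · rintro ⟨h1, h2⟩; exact ⟨p.1, h1, rfl, h2⟩

lemma card_shape (m : ℕ) (lam : ℕ → ℕ) :
    (shape m lam).card = ∑ r ∈ Finset.range m, lam r := by
  rw [shape, Finset.card_biUnion]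
  · exact Finset.sum_congr rfl fun r _ => by simp
  · intro a _ b _ hab
    simp only [Finset.disjoint_left]
    intro p hp hq
    simp only [Finset.mem_product, Finset.mem_singleton] at hp hq
    exact hab (hp.1 ▸ hq.1)

lemma shape_diagram {m : ℕ} {lam : ℕ → ℕ}
    (hanti : ∀ i j, i ≤ j → j < m → lam j ≤ lam i) :
    IsDiagram (shape m lam) := by
  intro p hp q h1 h2
  rw [mem_shape] at hp ⊢
  have := hanti q.1 p.1 h1 hp.1
  exact ⟨by omega, by omega⟩

lemma shape_erase {m : ℕ} {lam : ℕ → ℕ} {i : ℕ} (hi : i < m) (h0 : 0 < lam i) :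
    (shape m lam).erase (i, lam i - 1) = shape m (Function.update lam i (lam i - 1)) := by
  ext p
  rw [Finset.mem_erase, mem_shape, mem_shape]
  by_cases hp : p.1 = i
  · rw [hp, Function.update_self]
    constructor
    · rintro ⟨hne, -, h2⟩
      refine ⟨hi, ?_⟩
      rcases Nat.lt_or_ge p.2 (lam i - 1) with h | h
      · exact h
      · exfalso; apply hne
        have : p.2 = lam i - 1 := by omega
        exact Prod.ext hp this
    · rintro ⟨h1, h2⟩
      refine ⟨?_, hi, by omega⟩
      intro h
      rw [h] at h2
      simp at h2
  · rw [Function.update_of_ne hp]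
    constructor
    · rintro ⟨-, h⟩; exact h
    · rintro h
      exact ⟨fun hc => hp (by rw [hc]), h⟩

theorem branching (m : ℕ) (lam : ℕ → ℕ)
    (hanti : ∀ i j, i ≤ j → j < m → lam j ≤ lam i)
    (hne : (shape m lam).Nonempty) :
    sytCount (shape m lam)
      = ∑ i ∈ (Finset.range m).filter (fun i => 0 < lam i ∧ (i + 1 < m → lam (i+1) < lam i)),
          sytCount (shape m (Function.update lam i (lam i - 1))) := by
  classical
  set S := shape m lam with hS
  set N := S.card with hN
  have hdiag : IsDiagram S := shape_diagram hanti
  have hNpos : 1 ≤ N := Finset.card_pos.mpr hne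
  set good := (Finset.range m).filter
    (fun i => 0 < lam i ∧ (i + 1 < m → lam (i+1) < lam i)) with hgood
  set g : (ℕ × ℕ → ℕ) → ℕ := fun f => ((S.filter (fun p => f p = N)).sup Prod.fst) with hg
  have hmaxcell : ∀ f, IsSYT S f → ∃ p, p ∈ S ∧ f p = N ∧
      (∀ q ∈ S, f q = N → q = p) ∧ p = (p.1, lam p.1 - 1) ∧ p.1 ∈ good := by
    intro f hf
    obtain ⟨p, hp, hfp⟩ := exists_max hf hne
    have huniq : ∀ q ∈ S, f q = N → q = p := by
      intro q hq hfq
      exact hf.2.1.2.1 (by exact_mod_cast hq) (by exact_mod_cast hp) (hfq.trans hfp.symm)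
    obtain ⟨hc1, hc2⟩ := max_is_corner hf hp hfp
    have hpS := mem_shape.mp hp
    have hrow : p.2 = lam p.1 - 1 := by
      rw [mem_shape] at hc2
      simp only [not_and, not_lt] at hc2
      have := hc2 hpS.1
      omega
    have hgoodp : p.1 ∈ good := by
      rw [hgood, Finset.mem_filter, Finset.mem_range]
      refine ⟨hpS.1, by omega, ?_⟩
      intro hlt
      rw [mem_shape] at hc1
      simp only [not_and, not_lt] at hc1
      have := hc1 hlt
      omega
    exact ⟨p, hp, hfp, huniq, Prod.ext rfl hrow, hgoodp⟩
  have hgval : ∀ f, IsSYT S f → ∀ p, p ∈ S → f p = N → (∀ q ∈ S, f q = N → q = p) →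
      g f = p.1 := by
    intro f hf p hp hfp huniq
    have hfilter : S.filter (fun q => f q = N) = {p} := by
      ext q
      simp only [Finset.mem_filter, Finset.mem_singleton]
      constructor
      · rintro ⟨hq, hfq⟩; exact huniq q hq hfq
      · rintro rfl; exact ⟨hp, hfp⟩
    rw [hg]
    simp [hfilter]
  rw [sytCount_eq_card]
  rw [Finset.card_eq_sum_card_fiberwise (f := g) (t := good) (by
    intro f hf
    simp only [Finset.mem_coe, Set.Finite.mem_toFinset, Set.mem_setOf_eq] at hf
    obtain ⟨p, hp, hfp, huniq, hpr, hpg⟩ := hmaxcell f hf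
    rw [hgval f hf p hp hfp huniq]
    exact hpg)]
  refine Finset.sum_congr rfl fun i hi => ?_
  rw [hgood, Finset.mem_filter, Finset.mem_range] at hi
  obtain ⟨him, hipos, hinext⟩ := hi
  have hpcS : ((i : ℕ), lam i - 1) ∈ S := mem_shape.mpr ⟨him, by
    show lam i - 1 < lam i
    omega⟩
  have hc1 : ((i + 1 : ℕ), lam i - 1) ∉ S := by
    rw [mem_shape]
    simp only [not_and, not_lt]
    intro h
    have := hinext h
    omega
  have hc2 : ((i : ℕ), lam i - 1 + 1) ∉ S := by
    rw [mem_shape]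
    simp only [not_and, not_lt]
    intro h
    omega
  have herase : S.erase (i, lam i - 1) = shape m (Function.update lam i (lam i - 1)) :=
    shape_erase him hipos
  have hfiber : ∀ f, IsSYT S f → (g f = i ↔ f (i, lam i - 1) = N) := by
    intro f hf
    obtain ⟨p, hp, hfp, huniq, hpr, hpg⟩ := hmaxcell f hf
    rw [hgval f hf p hp hfp huniq]
    constructor
    · intro h
      have hpi : p = ((i : ℕ), lam i - 1) := by rw [hpr, h]
      rw [← hpi]; exact hfp
    · intro h
      have := huniq _ hpcS h
      rw [← this]
  rw [sytCount_eq_card]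
  refine Finset.card_nbij' (fun f => Function.update f (i, lam i - 1) 0)
    (fun f => Function.update f (i, lam i - 1) N) ?_ ?_ ?_ ?_
  · intro f hf
    rw [Finset.mem_coe, Finset.mem_filter] at hf
    obtain ⟨hfTF, hgf⟩ := hf
    simp only [Finset.mem_coe, Set.Finite.mem_toFinset, Set.mem_setOf_eq] at hfTF
    have hfmax := (hfiber f hfTF).mp hgf
    simp only [Finset.mem_coe, Set.Finite.mem_toFinset, Set.mem_setOf_eq]
    rw [← herase]
    exact restrict_syt hfTF hpcS hfmax
  · intro f hf
    simp only [Finset.mem_coe, Set.Finite.mem_toFinset, Set.mem_setOf_eq] at hf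
    rw [← herase] at hf
    have hext : IsSYT S (Function.update f (i, lam i - 1) N) :=
      extend_syt hdiag hpcS hc1 hc2 hf
    rw [Finset.mem_coe, Finset.mem_filter]
    constructor
    · simp only [Set.Finite.mem_toFinset, Set.mem_setOf_eq]
      exact hext
    · exact (hfiber _ hext).mpr (by rw [Function.update_self])
  · intro f hf
    rw [Finset.mem_coe, Finset.mem_filter] at hf
    have hfTF := hf.1
    simp only [Finset.mem_coe, Set.Finite.mem_toFinset, Set.mem_setOf_eq] at hfTF
    have hfmax := (hfiber f hfTF).mp hf.2
    funext q
    simp only [Function.update_apply]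
    by_cases hq : q = ((i : ℕ), lam i - 1)
    · simp [hq, ← hfmax]
    · simp [hq]
  · intro f hf
    simp only [Finset.mem_coe, Set.Finite.mem_toFinset, Set.mem_setOf_eq] at hf
    rw [← herase] at hf
    have hf0 : f (i, lam i - 1) = 0 :=
      hf.1 _ (Finset.notMem_erase _ S)
    funext q
    simp only [Function.update_apply]
    by_cases hq : q = ((i : ℕ), lam i - 1)
    · simp [hq, ← hf0]
    · simp [hq]

end Amus



namespace Amus

/-- decreasing-orientation Vandermonde product -/
def vprod {m : ℕ} (v : Fin m → ℚ) : ℚ := ∏ i : Fin m, ∏ j ∈ Finset.Ioi i, (v i - v j)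

lemma vprod_eq_det {m : ℕ} (v : Fin m → ℚ) :
    vprod v = (Matrix.vandermonde (fun i => -(v i))).det := by
  rw [Matrix.det_vandermonde, vprod]
  refine Finset.prod_congr rfl fun i _ => Finset.prod_congr rfl fun j _ => by ring

lemma vprod_eq_zero {m : ℕ} {v : Fin m → ℚ} {i j : Fin m} (hij : i ≠ j) (h : v i = v j) :
    vprod v = 0 := by
  rw [vprod_eq_det]
  rw [Matrix.det_vandermonde_eq_zero_iff]
  exact ⟨i, j, by simp [h], hij⟩

lemma vprod_ne_zero {m : ℕ} {v : Fin m → ℚ} (h : Function.Injective v) : vprod v ≠ 0 := by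
  rw [vprod_eq_det]
  exact Matrix.det_vandermonde_ne_zero_iff.mpr (fun a b hab => h (by simpa [neg_inj] using hab))

/-- Leibniz: sum over rows of det with row i multiplied columnwise by weights. -/
lemma det_updateRow_colweight {m : ℕ} (M : Matrix (Fin m) (Fin m) ℚ) (d : Fin m → ℚ) :
    ∑ i : Fin m, (M.updateRow i (fun j => d j * M i j)).det = (∑ j : Fin m, d j) * M.det := by
  have key : ∀ (r : Fin m), (M.updateRow r (fun j => d j * M r j)).det
      = ∑ σ : Equiv.Perm (Fin m), Equiv.Perm.sign σ •
          ((d (σ.symm r)) * ∏ i : Fin m, M (σ i) i) := by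
    intro r
    rw [Matrix.det_apply]
    refine Finset.sum_congr rfl fun σ _ => ?_
    congr 1
    have : ∀ i : Fin m, (M.updateRow r (fun j => d j * M r j)) (σ i) i
        = (if i = σ.symm r then d i else 1) * M (σ i) i := by
      intro i
      by_cases h : i = σ.symm r
      · subst h
        simp [Matrix.updateRow_apply]
      · have : σ i ≠ r := fun hc => h (by simp [← hc])
        simp [Matrix.updateRow_apply, this, h]
    rw [Finset.prod_congr rfl (fun i _ => this i), Finset.prod_mul_distrib]
    congr 1
    simp
  rw [Finset.sum_congr rfl (fun r _ => key r)]
  rw [Finset.sum_comm]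
  rw [Matrix.det_apply, Finset.mul_sum]
  refine Finset.sum_congr rfl fun σ _ => ?_
  have : ∀ x : Fin m, Equiv.Perm.sign σ • (d (σ.symm x) * ∏ i : Fin m, M (σ i) i)
      = d (σ.symm x) * (Equiv.Perm.sign σ • ∏ i : Fin m, M (σ i) i) := by
    intro x; rw [mul_smul_comm]
  rw [Finset.sum_congr rfl fun x _ => this x, ← Finset.sum_mul, Equiv.sum_comp σ.symm d]

end Amus

namespace Amus2
open Amus

noncomputable def qpoly (j : ℕ) : ℚ[X] := ∏ t ∈ Finset.range j, (X + C (t:ℚ))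

lemma qpoly_monic (j : ℕ) : (qpoly j).Monic :=
  monic_prod_of_monic _ _ fun t _ => monic_X_add_C _

lemma qpoly_natDegree (j : ℕ) : (qpoly j).natDegree = j := by
  rw [qpoly, natDegree_prod_of_monic _ _ fun t _ => monic_X_add_C _]
  simp only [natDegree_X_add_C]
  simp

lemma qpoly_shift (j : ℕ) (x : ℚ) : x * (qpoly j).eval (x + 1) = (qpoly (j+1)).eval x := by
  simp only [qpoly, eval_prod, eval_add, eval_X, eval_C]
  rw [Finset.prod_range_succ' (fun t => x + (t:ℚ))]
  push_cast
  rw [show ∀ S : ℚ, x * S = S * (x + 0) by intro S; ring]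
  congr 1
  exact (Finset.prod_congr rfl fun t _ => by ring)

lemma qpoly_succ_eval (j : ℕ) (x : ℚ) :
    (qpoly (j+1)).eval x = x * (qpoly j).eval x + (j:ℚ) * (qpoly j).eval x := by
  rw [qpoly, Finset.prod_range_succ, eval_mul, ← qpoly]
  simp only [eval_add, eval_X, eval_C]
  ring

lemma vprod_rec {m : ℕ} (v : Fin m → ℚ) :
    ∑ i : Fin m, v i * vprod (Function.update v i (v i - 1))
      = (∑ i : Fin m, v i - ∑ i : Fin m, (i : ℚ)) * vprod v := by
  set w : Fin m → ℚ := fun i => -(v i) with hw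
  set M : Matrix (Fin m) (Fin m) ℚ := Matrix.of fun i j => (qpoly (j:ℕ)).eval (w i) with hM
  have hdeg : ∀ j : Fin m, (qpoly (j:ℕ)).natDegree = (j:ℕ) := fun j => qpoly_natDegree _
  have hmon : ∀ j : Fin m, (qpoly (j:ℕ)).Monic := fun j => qpoly_monic _
  have detM : ∀ u : Fin m → ℚ, (Matrix.vandermonde u).det
      = (Matrix.of fun i j : Fin m => (qpoly (j:ℕ)).eval (u i)).det := fun u =>
    Matrix.det_eval_matrixOfPolynomials_eq_det_vandermonde u (fun j => qpoly (j:ℕ)) hdeg hmon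
  have hvp : vprod v = M.det := by rw [vprod_eq_det]; exact detM w
  have key : ∀ i : Fin m, v i * vprod (Function.update v i (v i - 1))
      = v i * M.det + (M.updateRow i (fun j => (-(j:ℚ)) * M i j)).det := by
    intro i
    have h1 : (fun k => -(Function.update v i (v i - 1) k)) = Function.update w i (w i + 1) := by
      funext k
      by_cases hk : k = i
      · subst hk; simp [hw]; ring
      · simp [hk, hw]
    have h2 : (Matrix.of fun a b : Fin m => (qpoly (b:ℕ)).eval (Function.update w i (w i + 1) a))
        = M.updateRow i (fun j => (qpoly (j:ℕ)).eval (w i + 1)) := by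
      ext a b
      by_cases ha : a = i
      · subst ha; simp [Matrix.updateRow_apply]
      · simp [Matrix.updateRow_apply, ha, hM]
    rw [vprod_eq_det, h1, detM, h2, ← Matrix.det_updateRow_smul]
    have h3 : (v i • fun j : Fin m => (qpoly (j:ℕ)).eval (w i + 1))
        = (fun j : Fin m => v i * M i j) + (fun j : Fin m => (-(j:ℚ)) * M i j) := by
      funext j
      have := qpoly_shift (j:ℕ) (w i)
      have h4 := qpoly_succ_eval (j:ℕ) (w i)
      simp only [Pi.smul_apply, smul_eq_mul, Pi.add_apply, hM, Matrix.of_apply]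
      have hv : v i = -(w i) := by simp [hw]
      rw [hv]
      have : -(w i) * (qpoly (j:ℕ)).eval (w i + 1) = -((qpoly ((j:ℕ)+1)).eval (w i)) := by
        rw [← this]; ring
      rw [this, h4]; ring
    rw [h3, Matrix.det_updateRow_add]
    congr 1
    have : (fun j : Fin m => v i * M i j) = v i • (fun j => M i j) := by
      funext j; simp
    rw [this, Matrix.det_updateRow_smul]
    congr 1
    rw [show (fun j => M i j) = M i from rfl, Matrix.updateRow_eq_self]
  rw [Finset.sum_congr rfl fun i _ => key i, Finset.sum_add_distrib, ← Finset.sum_mul,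
    det_updateRow_colweight M (fun j => -(j:ℚ)), hvp]
  rw [Finset.sum_neg_distrib]
  ring

end Amus2

namespace Amus3
open Amus Amus2

lemma prod_range_succ_factorial (c : ℕ) :
    ∏ t ∈ Finset.range c, ((t : ℚ) + 1) = (c.factorial : ℚ) := by
  induction c with
  | zero => simp
  | succ c ih => rw [Finset.prod_range_succ, ih, Nat.factorial_succ]; push_cast; ring

lemma prod_Ioi_sub (m : ℕ) (i : Fin m) :
    ∏ j ∈ Finset.Ioi i, ((j : ℚ) - (i : ℚ)) = ((m - 1 - (i : ℕ)).factorial : ℚ) := by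
  rw [← prod_range_succ_factorial]
  refine (Finset.prod_bij (fun (t : ℕ) (ht : t ∈ Finset.range (m - 1 - (i:ℕ))) =>
    (⟨(i:ℕ) + 1 + t, by have := i.isLt; simp only [Finset.mem_range] at ht; omega⟩ : Fin m))
    ?_ ?_ ?_ ?_).symm
  · intro t ht
    simp only [Finset.mem_Ioi, Fin.lt_def]
    show (i : ℕ) < (i : ℕ) + 1 + t
    omega
  · intro a ha b hb hab
    have := congrArg Fin.val hab
    simp only at this
    omega
  · intro j hj
    simp only [Finset.mem_Ioi] at hj
    have hji : (i : ℕ) < (j : ℕ) := hj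
    have hjm := j.isLt
    refine ⟨(j : ℕ) - (i : ℕ) - 1, Finset.mem_range.mpr (by omega), ?_⟩
    apply Fin.ext
    simp only
    omega
  · intro t ht
    simp only [Finset.mem_range] at ht
    push_cast
    ring

lemma vprod_staircase (m : ℕ) :
    vprod (fun i : Fin m => ((m - 1 - (i : ℕ) : ℕ) : ℚ))
      = ∏ i : Fin m, (((m - 1 - (i : ℕ)).factorial : ℚ)) := by
  rw [vprod]
  refine Finset.prod_congr rfl fun i _ => ?_
  rw [← prod_Ioi_sub m i]
  refine Finset.prod_congr rfl fun j hj => ?_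
  simp only [Finset.mem_Ioi] at hj
  have hji : (i : ℕ) < (j : ℕ) := hj
  have hjm := j.isLt
  have h1 : (m - 1 - (i:ℕ)) = (m - 1 - (j:ℕ)) + ((j:ℕ) - (i:ℕ)) := by omega
  rw [h1]
  push_cast [Nat.cast_sub (le_of_lt hji)]
  ring

lemma sum_staircase (m : ℕ) :
    ∑ i : Fin m, ((m - 1 - (i : ℕ) : ℕ) : ℚ) = ∑ i : Fin m, ((i : ℕ) : ℚ) := by
  rw [Fin.sum_univ_eq_sum_range (fun i => ((m - 1 - i : ℕ) : ℚ)),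
    Fin.sum_univ_eq_sum_range (fun i => ((i : ℕ) : ℚ))]
  exact Finset.sum_range_reflect (fun j => ((j : ℕ) : ℚ)) m

end Amus3

namespace Amus4
open Amus Amus2 Amus3

noncomputable def bQ (m : ℕ) (lam : ℕ → ℕ) : Fin m → ℚ :=
  fun i => ((lam (i:ℕ) + (m - 1 - (i:ℕ)) : ℕ) : ℚ)

theorem frobenius (m : ℕ) : ∀ (K : ℕ) (lam : ℕ → ℕ),
    (∀ i j, i ≤ j → j < m → lam j ≤ lam i) →
    (∑ r ∈ Finset.range m, lam r) = K →
    (sytCount (shape m lam) : ℚ) * ∏ i : Fin m, ((lam (i:ℕ) + (m - 1 - (i:ℕ))).factorial : ℚ)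
      = (K.factorial : ℚ) * vprod (bQ m lam) := by
  intro K
  induction K using Nat.strong_induction_on with
  | _ K IH =>
  intro lam hanti hsum
  by_cases hK : K = 0
  · subst hK
    have hz : ∀ r, r < m → lam r = 0 := fun r hr =>
      Finset.sum_eq_zero_iff.mp hsum r (Finset.mem_range.mpr hr)
    have hsh : shape m lam = ∅ := by
      ext p
      simp only [Finset.notMem_empty, iff_false, mem_shape, not_and, not_lt]
      intro h1
      rw [hz p.1 h1]
      omega
    rw [hsh, sytCount_empty]
    have hb : bQ m lam = fun i : Fin m => ((m - 1 - (i : ℕ) : ℕ) : ℚ) := by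
      funext i
      rw [bQ, hz _ i.isLt, Nat.zero_add]
    rw [hb, vprod_staircase]
    simp only [Nat.factorial_zero, Nat.cast_one, one_mul]
    exact Finset.prod_congr rfl fun i _ => by rw [hz _ i.isLt, Nat.zero_add]
  · have hKpos : 0 < K := Nat.pos_of_ne_zero hK
    have hne : (shape m lam).Nonempty := by
      by_contra hc
      rw [Finset.not_nonempty_iff_eq_empty] at hc
      have : ∀ r ∈ Finset.range m, lam r = 0 := by
        intro r hr
        by_contra hr0
        have : ((r : ℕ), 0) ∈ shape m lam :=
          mem_shape.mpr ⟨Finset.mem_range.mp hr, by show 0 < lam r; omega⟩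
        rw [hc] at this
        exact absurd this (Finset.notMem_empty _)
      rw [Finset.sum_eq_zero this] at hsum
      omega
    rw [branching m lam hanti hne, Nat.cast_sum, Finset.sum_filter,
      ← Fin.sum_univ_eq_sum_range (fun i => if 0 < lam i ∧ (i + 1 < m → lam (i+1) < lam i)
        then ((sytCount (shape m (Function.update lam i (lam i - 1))) : ℚ)) else 0) m,
      Finset.sum_mul]
    have hkey : ∀ k : Fin m,
        (if 0 < lam (k:ℕ) ∧ ((k:ℕ) + 1 < m → lam ((k:ℕ)+1) < lam (k:ℕ))
          then ((sytCount (shape m (Function.update lam (k:ℕ) (lam (k:ℕ) - 1))) : ℚ)) else 0)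
          * ∏ i : Fin m, ((lam (i:ℕ) + (m - 1 - (i:ℕ))).factorial : ℚ)
        = ((K-1).factorial : ℚ)
          * (bQ m lam k * vprod (Function.update (bQ m lam) k (bQ m lam k - 1))) := by
      intro k
      have hkm := k.isLt
      by_cases hp : 0 < lam (k:ℕ) ∧ ((k:ℕ) + 1 < m → lam ((k:ℕ)+1) < lam (k:ℕ))
      · rw [if_pos hp]
        obtain ⟨hp1, hp2⟩ := hp
        set lam' := Function.update lam (k:ℕ) (lam (k:ℕ) - 1) with hlam'
        have hanti' : ∀ a b, a ≤ b → b < m → lam' b ≤ lam' a := by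
          intro a b hab hbm
          rcases eq_or_ne b (k:ℕ) with rfl | hbne
          · rcases eq_or_ne a (k:ℕ) with rfl | hane
            · exact le_rfl
            · rw [hlam', Function.update_self, Function.update_of_ne hane]
              have := hanti a (k:ℕ) hab hbm
              omega
          · rw [hlam', Function.update_of_ne hbne]
            rcases eq_or_ne a (k:ℕ) with rfl | hane
            · rw [Function.update_self]
              have h1 : (k:ℕ) + 1 ≤ b := by omega
              have h2 := hanti ((k:ℕ)+1) b h1 hbm
              have h3 := hp2 (by omega)
              omega
            · rw [Function.update_of_ne hane]
              exact hanti a b hab hbm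
        have hsum' : (∑ r ∈ Finset.range m, lam' r) = K - 1 := by
          have h1 := Finset.sum_update_of_mem (Finset.mem_range.mpr hkm) lam (lam (k:ℕ) - 1)
          rw [Finset.sdiff_singleton_eq_erase] at h1
          have h2 := Finset.add_sum_erase (Finset.range m) lam (Finset.mem_range.mpr hkm)
          rw [hlam', h1]
          omega
        have IHk := IH (K-1) (by omega) lam' hanti' hsum'
        have hb' : bQ m lam' = Function.update (bQ m lam) k (bQ m lam k - 1) := by
          funext t
          by_cases ht : t = k
          · subst ht
            rw [Function.update_self]
            show ((lam' (t:ℕ) + (m - 1 - (t:ℕ)) : ℕ) : ℚ) = _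
            rw [hlam', Function.update_self]
            have hA : (lam (t:ℕ) - 1) + (m - 1 - (t:ℕ)) + 1 = lam (t:ℕ) + (m - 1 - (t:ℕ)) := by
              omega
            rw [bQ, ← hA]
            push_cast
            ring
          · rw [Function.update_of_ne ht]
            show ((lam' (t:ℕ) + (m - 1 - (t:ℕ)) : ℕ) : ℚ) = _
            rw [hlam', Function.update_of_ne (Fin.val_ne_of_ne ht), bQ]
        have hfact : ∏ i : Fin m, ((lam (i:ℕ) + (m - 1 - (i:ℕ))).factorial : ℚ)
            = bQ m lam k * ∏ i : Fin m, ((lam' (i:ℕ) + (m - 1 - (i:ℕ))).factorial : ℚ) := by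
          rw [← Finset.mul_prod_erase Finset.univ
            (fun i : Fin m => ((lam (i:ℕ) + (m - 1 - (i:ℕ))).factorial : ℚ)) (Finset.mem_univ k),
            ← Finset.mul_prod_erase Finset.univ
            (fun i : Fin m => ((lam' (i:ℕ) + (m - 1 - (i:ℕ))).factorial : ℚ)) (Finset.mem_univ k)]
          have herase : ∀ t ∈ Finset.univ.erase k,
              ((lam' (t:ℕ) + (m - 1 - (t:ℕ))).factorial : ℚ)
                = ((lam (t:ℕ) + (m - 1 - (t:ℕ))).factorial : ℚ) := by
            intro t ht
            rw [hlam', Function.update_of_ne (Fin.val_ne_of_ne (Finset.mem_erase.mp ht).1)]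
          rw [Finset.prod_congr rfl herase]
          rw [← mul_assoc]
          congr 1
          have hA : lam (k:ℕ) + (m - 1 - (k:ℕ))
              = (lam' (k:ℕ) + (m - 1 - (k:ℕ))) + 1 := by
            rw [hlam', Function.update_self]
            omega
          rw [hA, Nat.factorial_succ, bQ, ← hA]
          push_cast
          ring
        rw [hfact, show ((sytCount (shape m lam') : ℚ))
            * (bQ m lam k * ∏ i : Fin m, ((lam' (i:ℕ) + (m - 1 - (i:ℕ))).factorial : ℚ))
            = bQ m lam k * ((sytCount (shape m lam') : ℚ)
              * ∏ i : Fin m, ((lam' (i:ℕ) + (m - 1 - (i:ℕ))).factorial : ℚ)) from by ring,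
          IHk, hb']
        ring
      · rw [if_neg hp, zero_mul]
        by_cases h0 : lam (k:ℕ) = 0
        · by_cases hlast : (k:ℕ) + 1 = m
          · have hb0 : bQ m lam k = 0 := by
              rw [bQ]
              have : lam (k:ℕ) + (m - 1 - (k:ℕ)) = 0 := by omega
              rw [this, Nat.cast_zero]
            rw [hb0]
            ring
          · have hk1m : (k:ℕ) + 1 < m := by omega
            have h1 : lam ((k:ℕ)+1) = 0 := by
              have := hanti (k:ℕ) ((k:ℕ)+1) (by omega) hk1m
              omega
            set k1 : Fin m := ⟨(k:ℕ)+1, hk1m⟩ with hk1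
            have hzero : vprod (Function.update (bQ m lam) k (bQ m lam k - 1)) = 0 := by
              refine vprod_eq_zero (i := k) (j := k1) ?_ ?_
              · intro hc
                have := congrArg Fin.val hc
                rw [hk1] at this
                simp at this
              · rw [Function.update_self, Function.update_of_ne (by
                  intro hc
                  have := congrArg Fin.val hc
                  rw [hk1] at this
                  simp at this)]
                have hA : lam (k:ℕ) + (m - 1 - (k:ℕ))
                    = (lam ((k1:ℕ)) + (m - 1 - ((k1:ℕ)))) + 1 := by
                  have hv : (k1 : ℕ) = (k:ℕ) + 1 := rfl
                  rw [hv, h1]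
                  omega
                rw [bQ, bQ, hA]
                push_cast
                ring
            rw [hzero]
            ring
        · have hB : ¬((k:ℕ) + 1 < m → lam ((k:ℕ)+1) < lam (k:ℕ)) := by
            intro hb
            exact hp ⟨by omega, hb⟩
          push_neg at hB
          obtain ⟨hk1m, hge⟩ := hB
          have heq : lam ((k:ℕ)+1) = lam (k:ℕ) := by
            have := hanti (k:ℕ) ((k:ℕ)+1) (by omega) hk1m
            omega
          set k1 : Fin m := ⟨(k:ℕ)+1, hk1m⟩ with hk1
          have hzero : vprod (Function.update (bQ m lam) k (bQ m lam k - 1)) = 0 := by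
            refine vprod_eq_zero (i := k) (j := k1) ?_ ?_
            · intro hc
              have := congrArg Fin.val hc
              rw [hk1] at this
              simp at this
            · rw [Function.update_self, Function.update_of_ne (by
                intro hc
                have := congrArg Fin.val hc
                rw [hk1] at this
                simp at this)]
              have hA : lam (k:ℕ) + (m - 1 - (k:ℕ))
                  = (lam ((k1:ℕ)) + (m - 1 - ((k1:ℕ)))) + 1 := by
                have hv : (k1 : ℕ) = (k:ℕ) + 1 := rfl
                rw [hv, heq]
                omega
              rw [bQ, bQ, hA]
              push_cast
              ring
          rw [hzero]
          ring
    rw [Finset.sum_congr rfl fun k _ => hkey k, ← Finset.mul_sum, vprod_rec (bQ m lam)]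
    have hsb : (∑ i : Fin m, bQ m lam i) - (∑ i : Fin m, ((i:ℕ) : ℚ)) = (K : ℚ) := by
      have h1 : ∑ i : Fin m, bQ m lam i
          = (∑ i : Fin m, ((lam (i:ℕ) : ℕ) : ℚ)) + ∑ i : Fin m, ((m - 1 - (i:ℕ) : ℕ) : ℚ) := by
        rw [← Finset.sum_add_distrib]
        exact Finset.sum_congr rfl fun i _ => by rw [bQ]; push_cast; ring
      rw [h1, sum_staircase]
      have h2 : ∑ i : Fin m, ((lam (i:ℕ) : ℕ) : ℚ) = (K : ℚ) := by
        rw [Fin.sum_univ_eq_sum_range (fun i => ((lam i : ℕ) : ℚ)) m, ← Nat.cast_sum, hsum]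
      rw [h2]
      ring
    rw [hsb]
    have hfac : (K.factorial : ℚ) = (K : ℚ) * ((K-1).factorial : ℚ) := by
      obtain ⟨K', rfl⟩ : ∃ K', K = K' + 1 := ⟨K - 1, by omega⟩
      rw [Nat.factorial_succ]
      push_cast
      ring
    rw [hfac]
    ring

end Amus4

namespace Amus5
open Amus Amus2 Amus3 Amus4

lemma initial_seg (t : Finset ℕ) (h : ∀ c ∈ t, ∀ c', c' ≤ c → c' ∈ t) :
    t = Finset.range t.card := by
  have hsub : t ⊆ Finset.range t.card := by
    intro x hx
    rw [Finset.mem_range]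
    by_contra hc
    push_neg at hc
    have hsub2 : Finset.range (x + 1) ⊆ t := by
      intro y hy
      have hy' := Finset.mem_range.mp hy
      exact h x hx y (by omega)
    have := Finset.card_le_card hsub2
    rw [Finset.card_range] at this
    omega
  exact Finset.eq_of_subset_of_card_le hsub (by rw [Finset.card_range])

lemma mem_iff_lt_rl {S : Finset (ℕ × ℕ)} (hdiag : IsDiagram S) (r c : ℕ) :
    ((r, c) ∈ S) ↔ c < (S.filter (fun p => p.1 = r)).card := by
  classical
  set t := (S.filter (fun p => p.1 = r)).image Prod.snd with ht
  have hmem : ∀ c', c' ∈ t ↔ (r, c') ∈ S := by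
    intro c'
    rw [ht, Finset.mem_image]
    constructor
    · rintro ⟨p, hp, rfl⟩
      rw [Finset.mem_filter] at hp
      have hpe : p = (r, p.2) := Prod.ext hp.2 rfl
      rw [← hpe]
      exact hp.1
    · intro h
      exact ⟨(r, c'), Finset.mem_filter.mpr ⟨h, rfl⟩, rfl⟩
  have hcard : t.card = (S.filter (fun p => p.1 = r)).card := by
    rw [ht]
    apply Finset.card_image_of_injOn
    intro p hp q hq hpq
    rw [Finset.mem_coe, Finset.mem_filter] at hp hq
    exact Prod.ext (hp.2.trans hq.2.symm) hpq
  have hdc : ∀ c' ∈ t, ∀ c'', c'' ≤ c' → c'' ∈ t := by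
    intro c' hc' c'' hle
    rw [hmem] at hc' ⊢
    exact hdiag _ hc' (r, c'') le_rfl hle
  rw [← hmem, initial_seg t hdc, Finset.mem_range, hcard]

lemma mem_sqDiagram {n : ℕ} {p : ℕ × ℕ} : p ∈ sqDiagram n ↔ p.1 < n ∧ p.2 < n := by
  rw [sqDiagram, Finset.mem_product, Finset.mem_range, Finset.mem_range]

lemma eq_shape {n : ℕ} {S : Finset (ℕ × ℕ)} (hdiag : IsDiagram S) (hsub : S ⊆ sqDiagram n) :
    S = shape n (fun r => (S.filter (fun p => p.1 = r)).card) := by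
  ext p
  rw [mem_shape]
  constructor
  · intro hp
    refine ⟨(mem_sqDiagram.mp (hsub hp)).1, ?_⟩
    rw [← mem_iff_lt_rl hdiag]
    exact (show (p.1, p.2) = p from rfl) ▸ hp
  · rintro ⟨h1, h2⟩
    rw [← mem_iff_lt_rl hdiag] at h2
    exact (show (p.1, p.2) = p from rfl) ▸ h2

lemma rl_anti {S : Finset (ℕ × ℕ)} (hdiag : IsDiagram S) :
    ∀ i j, i ≤ j → (S.filter (fun p => p.1 = j)).card ≤ (S.filter (fun p => p.1 = i)).card := by
  intro i j hij
  by_contra h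
  push_neg at h
  have h1 : (j, (S.filter (fun p => p.1 = i)).card) ∈ S := (mem_iff_lt_rl hdiag _ _).mpr h
  have h2 : (i, (S.filter (fun p => p.1 = i)).card) ∈ S := hdiag _ h1 _ hij le_rfl
  have := (mem_iff_lt_rl hdiag i _).mp h2
  omega

lemma rl_le {n : ℕ} {S : Finset (ℕ × ℕ)} (hdiag : IsDiagram S) (hsub : S ⊆ sqDiagram n) :
    ∀ r, (S.filter (fun p => p.1 = r)).card ≤ n := by
  intro r
  by_contra h
  push_neg at h
  have h1 : (r, n) ∈ S := (mem_iff_lt_rl hdiag _ _).mpr h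
  have := (mem_sqDiagram.mp (hsub h1)).2
  omega

lemma firstRowLen_shape {n : ℕ} (hn : 0 < n) (μ : ℕ → ℕ) :
    firstRowLen (shape n μ) = μ 0 := by
  rw [firstRowLen]
  have h : (shape n μ).filter (fun p => p.1 = 0) = {(0 : ℕ)} ×ˢ Finset.range (μ 0) := by
    ext p
    rw [Finset.mem_filter, mem_shape, Finset.mem_product, Finset.mem_singleton,
      Finset.mem_range]
    constructor
    · rintro ⟨⟨h1, h2⟩, h3⟩
      rw [h3] at h2
      exact ⟨h3, h2⟩
    · rintro ⟨h1, h2⟩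
      rw [h1]
      exact ⟨⟨hn, h2⟩, rfl⟩
  rw [h, Finset.card_product, Finset.card_singleton, Finset.card_range, one_mul]

lemma next_shape {n : ℕ} (hn : 0 < n) (μ : ℕ → ℕ) :
    nextDiagram (shape n μ) = shape n (Function.update μ 0 (μ 0 + 1)) := by
  rw [nextDiagram, firstRowLen_shape hn]
  ext p
  rw [Finset.mem_insert, mem_shape, mem_shape]
  by_cases hp : p.1 = 0
  · rw [hp, Function.update_self]
    constructor
    · rintro (h | ⟨h1, h2⟩)
      · exact ⟨hn, by rw [h]; exact Nat.lt_succ_self _⟩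
      · exact ⟨h1, by omega⟩
    · rintro ⟨h1, h2⟩
      rcases Nat.lt_or_ge p.2 (μ 0) with h | h
      · right
        exact ⟨h1, h⟩
      · left
        have : p.2 = μ 0 := by omega
        exact Prod.ext hp this
  · rw [Function.update_of_ne hp]
    constructor
    · rintro (h | h)
      · exfalso
        apply hp
        rw [h]
      · exact h
    · intro h
      right
      exact h

lemma rot_shape {n : ℕ} (μ : ℕ → ℕ) (hμ : ∀ r, r < n → μ r ≤ n) :
    rotComplement n (shape n μ) = shape n (fun i => n - μ (n - 1 - i)) := by
  ext q
  rw [rotComplement, Finset.mem_image, mem_shape]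
  constructor
  · rintro ⟨p, hp, rfl⟩
    rw [Finset.mem_sdiff, mem_sqDiagram] at hp
    obtain ⟨⟨hp1, hp2⟩, hp3⟩ := hp
    rw [mem_shape] at hp3
    simp only [not_and, not_lt] at hp3
    have hp4 := hp3 hp1
    have hb := hμ p.1 hp1
    constructor
    · show n - 1 - p.1 < n
      omega
    · show n - 1 - p.2 < n - μ (n - 1 - (n - 1 - p.1))
      have : n - 1 - (n - 1 - p.1) = p.1 := by omega
      rw [this]
      omega
  · rintro ⟨h1, h2⟩
    have hμq := hμ (n - 1 - q.1) (by omega)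
    refine ⟨(n - 1 - q.1, n - 1 - q.2), ?_, ?_⟩
    · rw [Finset.mem_sdiff, mem_sqDiagram, mem_shape]
      simp only [not_and, not_lt]
      refine ⟨⟨by omega, by omega⟩, ?_⟩
      intro h3
      show μ (n - 1 - q.1) ≤ n - 1 - q.2
      omega
    · have hq2 : q.2 < n := by omega
      exact Prod.ext (by show n - 1 - (n - 1 - q.1) = q.1; omega)
        (by show n - 1 - (n - 1 - q.2) = q.2; omega)

end Amus5

namespace Amus6
open Amus Amus2 Amus3 Amus4 Amus5

lemma vprod_update_zero {n : ℕ} (hn : 0 < n) (v : Fin n → ℚ) (t : ℚ) :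
    vprod (Function.update v ⟨0, hn⟩ t)
      = (∏ j ∈ Finset.Ioi (⟨0, hn⟩ : Fin n), (t - v j))
        * ∏ i ∈ Finset.univ.erase (⟨0, hn⟩ : Fin n), ∏ j ∈ Finset.Ioi i, (v i - v j) := by
  rw [vprod, ← Finset.mul_prod_erase Finset.univ _ (Finset.mem_univ (⟨0, hn⟩ : Fin n))]
  congr 1
  · refine Finset.prod_congr rfl fun j hj => ?_
    rw [Finset.mem_Ioi] at hj
    rw [Function.update_self, Function.update_of_ne (ne_of_gt hj)]
  · refine Finset.prod_congr rfl fun i hi => Finset.prod_congr rfl fun j hj => ?_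
    have hi0 : i ≠ ⟨0, hn⟩ := (Finset.mem_erase.mp hi).1
    have hj0 : j ≠ ⟨0, hn⟩ := by
      rw [Finset.mem_Ioi] at hj
      intro hc
      rw [hc] at hj
      exact absurd hj (by simp [Fin.lt_def])
    rw [Function.update_of_ne hi0, Function.update_of_ne hj0]

lemma vprod_update_last {n : ℕ} (hn : 0 < n) (v : Fin n → ℚ) (t : ℚ) :
    vprod (Function.update v ⟨n-1, by omega⟩ t)
      = (∏ i ∈ Finset.Iio (⟨n-1, by omega⟩ : Fin n), (v i - t))
        * ∏ i : Fin n, ∏ j ∈ (Finset.Ioi i).erase ⟨n-1, by omega⟩, (v i - v j) := by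
  set L : Fin n := ⟨n-1, by omega⟩ with hL
  have hkey : ∀ i : Fin n,
      ∏ j ∈ Finset.Ioi i, (Function.update v L t i - Function.update v L t j)
      = (if i ∈ Finset.Iio L then (v i - t) else 1)
          * ∏ j ∈ (Finset.Ioi i).erase L, (v i - v j) := by
    intro i
    by_cases hiL : i < L
    · have hiL' : i ≠ L := ne_of_lt hiL
      rw [if_pos (Finset.mem_Iio.mpr hiL),
        ← Finset.mul_prod_erase (Finset.Ioi i) _ (Finset.mem_Ioi.mpr hiL)]
      congr 1
      · rw [Function.update_of_ne hiL', Function.update_self]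
      · refine Finset.prod_congr rfl fun j hj => ?_
        obtain ⟨hjL, hji⟩ := Finset.mem_erase.mp hj
        rw [Function.update_of_ne hiL', Function.update_of_ne hjL]
    · have hiL' : i = L := by
        apply Fin.ext
        have h1 := i.isLt
        have h2 : ¬((i:ℕ) < (L:ℕ)) := fun hc => hiL (Fin.lt_def.mpr hc)
        show (i:ℕ) = n - 1
        have h3 : (L:ℕ) = n - 1 := rfl
        omega
      rw [if_neg (by simp [Finset.mem_Iio, hiL]), hiL']
      have hempty : Finset.Ioi L = ∅ := by
        ext j
        simp only [Finset.mem_Ioi, Finset.notMem_empty, iff_false, Fin.lt_def]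
        have := j.isLt
        show ¬((L:ℕ) < (j:ℕ))
        have h3 : (L:ℕ) = n - 1 := rfl
        omega
      rw [hempty]
      simp
  rw [vprod, Finset.prod_congr rfl fun i _ => hkey i, Finset.prod_mul_distrib]
  congr 1
  rw [Finset.prod_ite_mem Finset.univ (Finset.Iio L) (fun i => v i - t), Finset.univ_inter]

lemma bQ_strictanti {m : ℕ} {lam : ℕ → ℕ} (hanti : ∀ i j, i ≤ j → j < m → lam j ≤ lam i) :
    ∀ s t : Fin m, s < t → bQ m lam t < bQ m lam s := by
  intro s t hst
  rw [bQ, bQ, Nat.cast_lt]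
  have h1 := hanti s t (le_of_lt hst) t.isLt
  have h2 := t.isLt
  have h3 : (s:ℕ) < (t:ℕ) := hst
  omega

lemma bQ_inj {m : ℕ} {lam : ℕ → ℕ} (hanti : ∀ i j, i ≤ j → j < m → lam j ≤ lam i) :
    Function.Injective (bQ m lam) := by
  intro s t h
  rcases lt_trichotomy s t with hc | hc | hc
  · exact absurd h (ne_of_gt (bQ_strictanti hanti s t hc))
  · exact hc
  · exact absurd h (ne_of_lt (bQ_strictanti hanti t s hc))

end Amus6

namespace Amus7
open Amus Amus2 Amus3 Amus4 Amus5 Amus6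

lemma prod_reflect {n : ℕ} (hn : 0 < n) (F G : Fin n → ℚ)
    (h : ∀ i : Fin n, (i:ℕ) < n - 1 → F i = G ⟨n - 1 - (i:ℕ), by omega⟩) :
    ∏ i ∈ Finset.Iio (⟨n-1, by omega⟩ : Fin n), F i
      = ∏ j ∈ Finset.Ioi (⟨0, hn⟩ : Fin n), G j := by
  refine Finset.prod_bij
    (fun (i : Fin n) (_ : i ∈ Finset.Iio (⟨n-1, by omega⟩ : Fin n)) =>
      (⟨n - 1 - (i:ℕ), by omega⟩ : Fin n)) ?_ ?_ ?_ ?_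
  · intro a ha
    rw [Finset.mem_Iio, Fin.lt_def] at ha
    rw [Finset.mem_Ioi, Fin.lt_def]
    show (0:ℕ) < n - 1 - (a:ℕ)
    have : (a:ℕ) < n - 1 := ha
    omega
  · intro a ha b hb hab
    rw [Finset.mem_Iio, Fin.lt_def] at ha hb
    have ha' : (a:ℕ) < n - 1 := ha
    have hb' : (b:ℕ) < n - 1 := hb
    have := congrArg Fin.val hab
    simp only at this
    exact Fin.ext (by omega)
  · intro b hb
    rw [Finset.mem_Ioi, Fin.lt_def] at hb
    have hb' : (0:ℕ) < (b:ℕ) := hb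
    have hbn := b.isLt
    refine ⟨⟨n - 1 - (b:ℕ), by omega⟩, ?_, ?_⟩
    · rw [Finset.mem_Iio, Fin.lt_def]
      show n - 1 - (b:ℕ) < n - 1
      omega
    · exact Fin.ext (by show n - 1 - (n - 1 - (b:ℕ)) = (b:ℕ); omega)
  · intro a ha
    rw [Finset.mem_Iio, Fin.lt_def] at ha
    exact h a ha

end Amus7


section
open Amus Amus2 Amus3 Amus4 Amus5 Amus6 Amus7

/-- The "amusing identity" \eqref{eq:amus}: for a Young diagram `λ` of area `j-1`
contained in the `n × n` square whose first row is shorter than `n`,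
`d(λ)·d(□ₙ∖next(λ)) / (d(next(λ))·d(□ₙ∖λ)) = (n² − λ(1)²)/(j·(n² − j + 1))`. -/
theorem amusing_identity (n j : ℕ) (hn : 0 < n) (lam : Finset (ℕ × ℕ))
    (hdiag : IsDiagram lam) (hsub : lam ⊆ sqDiagram n)
    (hcard : lam.card + 1 = j) (hrow : firstRowLen lam < n) :
    ((sytCount lam : ℚ) * sytCount (rotComplement n (nextDiagram lam))) /
        ((sytCount (nextDiagram lam) : ℚ) * sytCount (rotComplement n lam))
      = ((n ^ 2 : ℚ) - (firstRowLen lam : ℚ) ^ 2) /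
        ((j : ℚ) * ((n ^ 2 : ℚ) - (j : ℚ) + 1)) := by
  classical
  set rl : ℕ → ℕ := fun r => (lam.filter (fun p => p.1 = r)).card with hrl
  have hlam : lam = shape n rl := eq_shape hdiag hsub
  have hfrl : firstRowLen lam = rl 0 := rfl
  have hkn : rl 0 < n := by rw [← hfrl]; exact hrow
  have hanti1 : ∀ i j', i ≤ j' → j' < n → rl j' ≤ rl i :=
    fun i j' hij _ => rl_anti hdiag i j' hij
  have hrln : ∀ r, rl r ≤ n := rl_le hdiag hsub
  have hrlk : ∀ r, rl r ≤ rl 0 := fun r => rl_anti hdiag 0 r (Nat.zero_le r)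
  have hsum1 : (∑ r ∈ Finset.range n, rl r) = j - 1 := by
    have h := card_shape n rl
    rw [← hlam] at h
    omega
  have hj1 : 1 ≤ j := by omega
  have hsumle : (∑ r ∈ Finset.range n, rl r) ≤ n * rl 0 := by
    calc (∑ r ∈ Finset.range n, rl r) ≤ ∑ _r ∈ Finset.range n, rl 0 :=
          Finset.sum_le_sum fun r _ => hrlk r
      _ = n * rl 0 := by rw [Finset.sum_const, Finset.card_range, smul_eq_mul]
  have hnn : n * rl 0 + n ≤ n * n := by
    have h1 : rl 0 + 1 ≤ n := hkn
    calc n * rl 0 + n = n * (rl 0 + 1) := by ring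
      _ ≤ n * n := Nat.mul_le_mul_left n h1
  have hjn2 : j ≤ n * n := by omega
  -- the four partition functions
  set lam2 := Function.update rl 0 (rl 0 + 1) with hlam2
  set lam3 : ℕ → ℕ := fun i => n - rl (n - 1 - i) with hlam3
  set lam4 : ℕ → ℕ := fun i => n - lam2 (n - 1 - i) with hlam4
  have hlam20 : lam2 0 = rl 0 + 1 := by rw [hlam2, Function.update_self]
  have hlam2ne : ∀ r, r ≠ 0 → lam2 r = rl r := fun r hr => by
    rw [hlam2, Function.update_of_ne hr]
  have hlam2le : ∀ r, r < n → lam2 r ≤ n := by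
    intro r hr
    by_cases h : r = 0
    · rw [h, hlam20]; omega
    · rw [hlam2ne r h]; exact hrln r
  have hanti2 : ∀ i j', i ≤ j' → j' < n → lam2 j' ≤ lam2 i := by
    intro i j' hij hj'
    by_cases hj0 : j' = 0
    · have : i = 0 := by omega
      rw [this, hj0]
    · rw [hlam2ne j' hj0]
      by_cases hi0 : i = 0
      · rw [hi0, hlam20]
        have := hrlk j'
        omega
      · rw [hlam2ne i hi0]
        exact hanti1 i j' hij hj'
  have hanti3 : ∀ i j', i ≤ j' → j' < n → lam3 j' ≤ lam3 i := by
    intro i j' hij hj'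
    show n - rl (n - 1 - j') ≤ n - rl (n - 1 - i)
    have h1 : n - 1 - j' ≤ n - 1 - i := by omega
    have h2 : rl (n - 1 - i) ≤ rl (n - 1 - j') := rl_anti hdiag _ _ h1
    omega
  have hanti4 : ∀ i j', i ≤ j' → j' < n → lam4 j' ≤ lam4 i := by
    intro i j' hij hj'
    show n - lam2 (n - 1 - j') ≤ n - lam2 (n - 1 - i)
    have h1 : n - 1 - j' ≤ n - 1 - i := by omega
    have h2 : lam2 (n - 1 - i) ≤ lam2 (n - 1 - j') := hanti2 _ _ h1 (by omega)
    omega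
  -- sums
  have hsum2 : (∑ r ∈ Finset.range n, lam2 r) = j := by
    have h1 := Finset.sum_update_of_mem (Finset.mem_range.mpr hn) rl (rl 0 + 1)
    rw [Finset.sdiff_singleton_eq_erase] at h1
    have h2 := Finset.add_sum_erase (Finset.range n) rl (Finset.mem_range.mpr hn)
    rw [hlam2, h1]
    omega
  have hsumrefl : ∀ (μ : ℕ → ℕ), (∀ r, r < n → μ r ≤ n) →
      (∑ r ∈ Finset.range n, (n - μ (n - 1 - r))) + (∑ r ∈ Finset.range n, μ r) = n * n := by
    intro μ hμ
    have h1 : (∑ r ∈ Finset.range n, μ (n - 1 - r)) = ∑ r ∈ Finset.range n, μ r :=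
      Finset.sum_range_reflect μ n
    have h2 : (∑ r ∈ Finset.range n, (n - μ (n - 1 - r)))
        + (∑ r ∈ Finset.range n, μ (n - 1 - r)) = ∑ r ∈ Finset.range n, n := by
      rw [← Finset.sum_add_distrib]
      refine Finset.sum_congr rfl fun r hr => ?_
      have := hμ (n - 1 - r) (by omega)
      omega
    rw [h1] at h2
    rw [h2, Finset.sum_const, Finset.card_range, smul_eq_mul]
  have hsum3 : (∑ r ∈ Finset.range n, lam3 r) = n * n + 1 - j := by
    have h := hsumrefl rl (fun r _ => hrln r)
    have h2 : (∑ r ∈ Finset.range n, lam3 r)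
        = ∑ r ∈ Finset.range n, (n - rl (n - 1 - r)) := rfl
    omega
  have hsum4 : (∑ r ∈ Finset.range n, lam4 r) = n * n - j := by
    have h := hsumrefl lam2 hlam2le
    have h2 : (∑ r ∈ Finset.range n, lam4 r)
        = ∑ r ∈ Finset.range n, (n - lam2 (n - 1 - r)) := rfl
    omega
  -- shapes
  have hs2 : nextDiagram lam = shape n lam2 := by rw [hlam, next_shape hn rl]
  have hs3 : rotComplement n lam = shape n lam3 := by
    rw [hlam, rot_shape rl (fun r _ => hrln r)]
  have hs4 : rotComplement n (nextDiagram lam) = shape n lam4 := by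
    rw [hs2, rot_shape lam2 hlam2le]
  -- frobenius
  have F1 := frobenius n (j - 1) rl hanti1 hsum1
  have F2 := frobenius n j lam2 hanti2 hsum2
  have F3 := frobenius n (n * n + 1 - j) lam3 hanti3 hsum3
  have F4 := frobenius n (n * n - j) lam4 hanti4 hsum4
  set z : Fin n := ⟨0, hn⟩ with hz
  set L : Fin n := ⟨n - 1, by omega⟩ with hL
  have hzval : (z : ℕ) = 0 := rfl
  have hLval : (L : ℕ) = n - 1 := rfl
  -- b-function relations
  have hbz : bQ n lam2 = Function.update (bQ n rl) z (bQ n rl z + 1) := by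
    funext t
    by_cases ht : t = z
    · rw [ht, Function.update_self]
      show ((lam2 ((z:ℕ)) + (n - 1 - (z:ℕ)) : ℕ) : ℚ)
        = ((rl ((z:ℕ)) + (n - 1 - (z:ℕ)) : ℕ) : ℚ) + 1
      rw [hzval, hlam20]
      push_cast
      ring
    · rw [Function.update_of_ne ht]
      show ((lam2 ((t:ℕ)) + (n - 1 - (t:ℕ)) : ℕ) : ℚ) = _
      rw [hlam2ne (t:ℕ) (fun hc => ht (Fin.ext (by rw [hc, hzval])))]
      rfl
  have hlam34ne : ∀ t : Fin n, t ≠ L → lam4 (t:ℕ) = lam3 (t:ℕ) := by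
    intro t ht
    have htv : (t:ℕ) < n - 1 := by
      have h1 := t.isLt
      have h2 : (t:ℕ) ≠ n - 1 := fun hc => ht (Fin.ext (by rw [hc, hLval]))
      omega
    simp only [hlam4, hlam3]
    rw [hlam2ne (n - 1 - (t:ℕ)) (by omega)]
  have hlam3L : lam3 (L:ℕ) = n - rl 0 := by
    simp only [hlam3, hLval, Nat.sub_self]
  have hlam4L : lam4 (L:ℕ) = n - (rl 0 + 1) := by
    simp only [hlam4, hLval, Nat.sub_self]
    rw [hlam20]
  have hbL : bQ n lam4 = Function.update (bQ n lam3) L (bQ n lam3 L - 1) := by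
    funext t
    by_cases ht : t = L
    · rw [ht, Function.update_self]
      show ((lam4 ((L:ℕ)) + (n - 1 - (L:ℕ)) : ℕ) : ℚ)
        = ((lam3 ((L:ℕ)) + (n - 1 - (L:ℕ)) : ℕ) : ℚ) - 1
      rw [hlam3L, hlam4L, hLval]
      have hA : (n - rl 0) + (n - 1 - (n - 1)) = ((n - (rl 0 + 1)) + (n - 1 - (n - 1))) + 1 := by
        omega
      rw [hA]
      push_cast
      ring
    · rw [Function.update_of_ne ht]
      show ((lam4 ((t:ℕ)) + (n - 1 - (t:ℕ)) : ℕ) : ℚ) = _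
      rw [hlam34ne t ht]
      rfl
  -- product decomposition
  set v := bQ n rl with hv
  set w := bQ n lam3 with hw
  have hV1 : vprod v = (∏ jj ∈ Finset.Ioi z, (v z - v jj))
      * ∏ i ∈ Finset.univ.erase z, ∏ jj ∈ Finset.Ioi i, (v i - v jj) := by
    conv_lhs => rw [← Function.update_eq_self z v]
    exact vprod_update_zero hn v (v z)
  have hV2 : vprod (bQ n lam2) = (∏ jj ∈ Finset.Ioi z, ((v z + 1) - v jj))
      * ∏ i ∈ Finset.univ.erase z, ∏ jj ∈ Finset.Ioi i, (v i - v jj) := by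
    rw [hbz]
    exact vprod_update_zero hn v (v z + 1)
  have hV3 : vprod w = (∏ i ∈ Finset.Iio L, (w i - w L))
      * ∏ i : Fin n, ∏ jj ∈ (Finset.Ioi i).erase L, (w i - w jj) := by
    conv_lhs => rw [← Function.update_eq_self L w]
    exact vprod_update_last hn w (w L)
  have hV4 : vprod (bQ n lam4) = (∏ i ∈ Finset.Iio L, (w i - (w L - 1)))
      * ∏ i : Fin n, ∏ jj ∈ (Finset.Ioi i).erase L, (w i - w jj) := by
    rw [hbL]
    exact vprod_update_last hn w (w L - 1)
  -- the key cross equalities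
  have hnat : ∀ i : Fin n, (i:ℕ) < n - 1 →
      w i + v ⟨n - 1 - (i:ℕ), by omega⟩ = v z + w L := by
    intro i hi
    have h1 : w i = ((lam3 (i:ℕ) + (n - 1 - (i:ℕ)) : ℕ) : ℚ) := rfl
    have h2 : v (⟨n - 1 - (i:ℕ), by omega⟩ : Fin n)
        = ((rl (n - 1 - (i:ℕ)) + (n - 1 - (n - 1 - (i:ℕ))) : ℕ) : ℚ) := rfl
    have h3 : v z = ((rl 0 + (n - 1 - 0) : ℕ) : ℚ) := rfl
    have h4 : w L = ((lam3 (L:ℕ) + (n - 1 - (L:ℕ)) : ℕ) : ℚ) := rfl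
    rw [h1, h2, h3, h4, ← Nat.cast_add, ← Nat.cast_add]
    congr 1
    rw [hlam3L, hLval]
    simp only [hlam3]
    have h5 := hrln (n - 1 - (i:ℕ))
    have h6 := hrln 0
    omega
  have hA0B0 : (∏ i ∈ Finset.Iio L, (w i - w L)) = ∏ jj ∈ Finset.Ioi z, (v z - v jj) := by
    refine prod_reflect hn _ _ fun i hi => ?_
    have := hnat i hi
    linarith
  have hA1B1 : (∏ i ∈ Finset.Iio L, (w i - (w L - 1)))
      = ∏ jj ∈ Finset.Ioi z, ((v z + 1) - v jj) := by
    refine prod_reflect hn _ _ fun i hi => ?_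
    have := hnat i hi
    linarith
  have hVV : vprod v * vprod (bQ n lam4) = vprod (bQ n lam2) * vprod w := by
    rw [hV1, hV2, hV3, hV4, hA0B0, hA1B1]
    ring
  -- factorial product relations
  have hP2 : (∏ i : Fin n, ((lam2 (i:ℕ) + (n - 1 - (i:ℕ))).factorial : ℚ))
      = bQ n lam2 z * ∏ i : Fin n, ((rl (i:ℕ) + (n - 1 - (i:ℕ))).factorial : ℚ) := by
    rw [← Finset.mul_prod_erase Finset.univ
      (fun i : Fin n => ((lam2 (i:ℕ) + (n - 1 - (i:ℕ))).factorial : ℚ)) (Finset.mem_univ z),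
      ← Finset.mul_prod_erase Finset.univ
      (fun i : Fin n => ((rl (i:ℕ) + (n - 1 - (i:ℕ))).factorial : ℚ)) (Finset.mem_univ z)]
    have herase : ∀ t ∈ Finset.univ.erase z,
        ((lam2 (t:ℕ) + (n - 1 - (t:ℕ))).factorial : ℚ)
          = ((rl (t:ℕ) + (n - 1 - (t:ℕ))).factorial : ℚ) := by
      intro t ht
      rw [hlam2ne (t:ℕ) (fun hc =>
        (Finset.mem_erase.mp ht).1 (Fin.ext (by rw [hc, hzval])))]
    rw [Finset.prod_congr rfl herase, ← mul_assoc]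
    congr 1
    have hA : lam2 ((z:ℕ)) + (n - 1 - (z:ℕ)) = (rl ((z:ℕ)) + (n - 1 - (z:ℕ))) + 1 := by
      rw [hzval, hlam20]
      omega
    show ((lam2 ((z:ℕ)) + (n - 1 - (z:ℕ))).factorial : ℚ) = _
    rw [hA, Nat.factorial_succ]
    have hb2 : bQ n lam2 z = ((lam2 ((z:ℕ)) + (n - 1 - (z:ℕ)) : ℕ) : ℚ) := rfl
    rw [hb2, hA]
    push_cast
    ring
  have hP3 : (∏ i : Fin n, ((lam3 (i:ℕ) + (n - 1 - (i:ℕ))).factorial : ℚ))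
      = bQ n lam3 L * ∏ i : Fin n, ((lam4 (i:ℕ) + (n - 1 - (i:ℕ))).factorial : ℚ) := by
    rw [← Finset.mul_prod_erase Finset.univ
      (fun i : Fin n => ((lam3 (i:ℕ) + (n - 1 - (i:ℕ))).factorial : ℚ)) (Finset.mem_univ L),
      ← Finset.mul_prod_erase Finset.univ
      (fun i : Fin n => ((lam4 (i:ℕ) + (n - 1 - (i:ℕ))).factorial : ℚ)) (Finset.mem_univ L)]
    have herase : ∀ t ∈ Finset.univ.erase L,
        ((lam3 (t:ℕ) + (n - 1 - (t:ℕ))).factorial : ℚ)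
          = ((lam4 (t:ℕ) + (n - 1 - (t:ℕ))).factorial : ℚ) := by
      intro t ht
      rw [hlam34ne t (Finset.mem_erase.mp ht).1]
    rw [Finset.prod_congr rfl herase, ← mul_assoc]
    congr 1
    have hA : lam3 ((L:ℕ)) + (n - 1 - (L:ℕ)) = (lam4 ((L:ℕ)) + (n - 1 - (L:ℕ))) + 1 := by
      rw [hlam3L, hlam4L]
      omega
    show ((lam3 ((L:ℕ)) + (n - 1 - (L:ℕ))).factorial : ℚ) = _
    rw [hA, Nat.factorial_succ]
    have hb3 : bQ n lam3 L = ((lam3 ((L:ℕ)) + (n - 1 - (L:ℕ)) : ℕ) : ℚ) := rfl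
    rw [hb3, hA]
    push_cast
    ring
  -- nonvanishing
  have hV2ne : vprod (bQ n lam2) ≠ 0 := vprod_ne_zero (bQ_inj hanti2)
  have hV3ne : vprod w ≠ 0 := vprod_ne_zero (bQ_inj hanti3)
  have hPne : ∀ (μ : ℕ → ℕ),
      (∏ i : Fin n, ((μ (i:ℕ) + (n - 1 - (i:ℕ))).factorial : ℚ)) ≠ 0 := by
    intro μ
    refine Finset.prod_ne_zero_iff.mpr fun i _ => ?_
    exact_mod_cast (Nat.factorial_pos _).ne'
  have hc2ne : ((sytCount (shape n lam2) : ℚ)) ≠ 0 := by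
    intro hc
    rw [hc, zero_mul] at F2
    exact (mul_ne_zero (by exact_mod_cast (Nat.factorial_pos j).ne') hV2ne) F2.symm
  have hc3ne : ((sytCount (shape n lam3) : ℚ)) ≠ 0 := by
    intro hc
    rw [hc, zero_mul] at F3
    exact (mul_ne_zero (by exact_mod_cast (Nat.factorial_pos _).ne') hV3ne) F3.symm
  -- main multiplicative identity
  have hjfac : (j.factorial : ℚ) = (j : ℚ) * ((j-1).factorial : ℚ) := by
    obtain ⟨j', rfl⟩ : ∃ j', j = j' + 1 := ⟨j - 1, by omega⟩
    rw [Nat.factorial_succ]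
    push_cast
    ring
  have hKfac : ((n * n + 1 - j).factorial : ℚ)
      = ((n * n + 1 - j : ℕ) : ℚ) * ((n * n - j).factorial : ℚ) := by
    have h1 : n * n + 1 - j = (n * n - j) + 1 := by omega
    rw [h1, Nat.factorial_succ]
    push_cast
    ring
  have hMain : (sytCount (shape n lam2) : ℚ) * (sytCount (shape n lam3) : ℚ)
        * (bQ n lam2 z * bQ n lam3 L)
      = (j : ℚ) * ((n * n + 1 - j : ℕ) : ℚ)
        * ((sytCount (shape n rl) : ℚ) * (sytCount (shape n lam4) : ℚ)) := by
    refine mul_right_cancel₀ (mul_ne_zero (hPne rl) (hPne lam4)) ?_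
    calc (sytCount (shape n lam2) : ℚ) * (sytCount (shape n lam3) : ℚ)
          * (bQ n lam2 z * bQ n lam3 L)
          * ((∏ i : Fin n, ((rl (i:ℕ) + (n - 1 - (i:ℕ))).factorial : ℚ))
            * ∏ i : Fin n, ((lam4 (i:ℕ) + (n - 1 - (i:ℕ))).factorial : ℚ))
        = ((sytCount (shape n lam2) : ℚ)
            * ∏ i : Fin n, ((lam2 (i:ℕ) + (n - 1 - (i:ℕ))).factorial : ℚ))
          * ((sytCount (shape n lam3) : ℚ)
            * ∏ i : Fin n, ((lam3 (i:ℕ) + (n - 1 - (i:ℕ))).factorial : ℚ)) := by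
          rw [hP2, hP3]; ring
      _ = ((j.factorial : ℚ) * vprod (bQ n lam2))
          * (((n * n + 1 - j).factorial : ℚ) * vprod w) := by rw [F2, F3]
      _ = (j : ℚ) * ((n * n + 1 - j : ℕ) : ℚ)
          * ((((j-1).factorial : ℚ)) * (((n * n - j).factorial : ℚ))
            * (vprod (bQ n lam2) * vprod w)) := by
          rw [hjfac, hKfac]; ring
      _ = (j : ℚ) * ((n * n + 1 - j : ℕ) : ℚ)
          * ((((j-1).factorial : ℚ)) * (((n * n - j).factorial : ℚ))
            * (vprod v * vprod (bQ n lam4))) := by rw [← hVV]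
      _ = (j : ℚ) * ((n * n + 1 - j : ℕ) : ℚ)
          * ((((j-1).factorial : ℚ) * vprod v)
            * (((n * n - j).factorial : ℚ) * vprod (bQ n lam4))) := by ring
      _ = (j : ℚ) * ((n * n + 1 - j : ℕ) : ℚ)
          * (((sytCount (shape n rl) : ℚ)
              * ∏ i : Fin n, ((rl (i:ℕ) + (n - 1 - (i:ℕ))).factorial : ℚ))
            * ((sytCount (shape n lam4) : ℚ)
              * ∏ i : Fin n, ((lam4 (i:ℕ) + (n - 1 - (i:ℕ))).factorial : ℚ))) := by
          rw [F1, F4]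
      _ = (j : ℚ) * ((n * n + 1 - j : ℕ) : ℚ)
          * ((sytCount (shape n rl) : ℚ) * (sytCount (shape n lam4) : ℚ))
          * ((∏ i : Fin n, ((rl (i:ℕ) + (n - 1 - (i:ℕ))).factorial : ℚ))
            * ∏ i : Fin n, ((lam4 (i:ℕ) + (n - 1 - (i:ℕ))).factorial : ℚ)) := by ring
  -- compute the scalar factors
  have hbb : bQ n lam2 z * bQ n lam3 L = (n:ℚ)^2 - ((rl 0 : ℕ):ℚ)^2 := by
    have hb2 : bQ n lam2 z = ((lam2 0 + (n - 1 - 0) : ℕ) : ℚ) := rfl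
    have hb3 : bQ n lam3 L = ((lam3 (L:ℕ) + (n - 1 - (L:ℕ)) : ℕ) : ℚ) := rfl
    rw [hb2, hb3, hlam20, hlam3L, hLval]
    have h1 : rl 0 + 1 + (n - 1 - 0) = n + rl 0 := by omega
    have h2 : n - rl 0 + (n - 1 - (n - 1)) = n - rl 0 := by omega
    rw [h1, h2, Nat.cast_sub (le_of_lt hkn)]
    push_cast
    ring
  have hKQ : ((n * n + 1 - j : ℕ) : ℚ) = (n:ℚ)^2 - (j:ℚ) + 1 := by
    rw [Nat.cast_sub (by omega)]
    push_cast
    ring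
  rw [hbb, hKQ] at hMain
  -- finish
  rw [hs4, hs2, hs3, hlam, firstRowLen_shape hn rl]
  have hjne : (j : ℚ) ≠ 0 := Nat.cast_ne_zero.mpr (by omega)
  have hKne : (n:ℚ)^2 - (j:ℚ) + 1 ≠ 0 := by
    rw [← hKQ]
    exact Nat.cast_ne_zero.mpr (by omega)
  have hden : (j : ℚ) * ((n:ℚ)^2 - (j:ℚ) + 1) ≠ 0 := mul_ne_zero hjne hKne
  have hnum : ((sytCount (shape n lam2) : ℚ)) * ((sytCount (shape n lam3) : ℚ)) ≠ 0 :=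
    mul_ne_zero hc2ne hc3ne
  rw [div_eq_div_iff hnum (by push_cast; convert hden using 2 <;> push_cast <;> ring)]
  push_cast
  linear_combination (-1 : ℚ) * hMain

end
end

section
/- For any Young diagram λ of area k and any integer m, the number of plane partitions of m of shape λ with all parts distinct equals d(λ)·q(m,k), where d(λ) is the number of standard Young tableaux of shape λ and q(m,k) is the number of partitions of m into k distinct positive parts. Moreover, the total number of plane partitions of m of shape λ satisfies p_λ(m) ≤ d(λ)·p(m,k), where p(m,k) is the number of partitions of m into k positive parts. -/
open Finset

/-- `f` is a plane partition of `m` of shape `S`: positive parts on the cells of `S`,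
summing to `m`, weakly decreasing along rows and columns, and `0` off `S`. -/
def IsPlanePartition (S : Finset (ℕ × ℕ)) (m : ℕ) (f : ℕ × ℕ → ℕ) : Prop :=
  (∀ p ∉ S, f p = 0) ∧ (∀ p ∈ S, 1 ≤ f p) ∧ (∑ p ∈ S, f p) = m ∧
  (∀ p ∈ S, ∀ q ∈ S, p.1 ≤ q.1 → p.2 ≤ q.2 → f q ≤ f p)

/-- The number of plane partitions of `m` of shape `S`. -/
noncomputable def ppCount (S : Finset (ℕ × ℕ)) (m : ℕ) : ℕ :=
  Set.ncard {f : ℕ × ℕ → ℕ | IsPlanePartition S m f}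

/-- The number of plane partitions of `m` of shape `S` with all parts distinct. -/
noncomputable def dppCount (S : Finset (ℕ × ℕ)) (m : ℕ) : ℕ :=
  Set.ncard {f : ℕ × ℕ → ℕ | IsPlanePartition S m f ∧ Set.InjOn f ↑S}

/-- `q(m,k)`: the number of partitions of `m` into `k` distinct positive parts. -/
noncomputable def distinctPartitionCount (m k : ℕ) : ℕ :=
  Set.ncard {s : Finset ℕ | s.card = k ∧ (∑ i ∈ s, i) = m ∧ 0 ∉ s}

/-- `p(m,k)`: the number of partitions of `m` into `k` positive parts. -/
noncomputable def partitionCount (m k : ℕ) : ℕ :=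
  Set.ncard {M : Multiset ℕ | Multiset.card M = k ∧ M.sum = m ∧ 0 ∉ M}

/-! ### Auxiliary machinery -/

set_option linter.unusedSectionVars false

section Rank
variable {α β : Type*} [DecidableEq α] [LinearOrder β] (T : Finset α) (key : α → β)

/-- rank of `a` among elements of `T`, ordered by `key`. -/
def rk (a : α) : ℕ := (T.filter (fun x => key x < key a)).card + 1

lemma rk_lt_rk {a b : α} (ha : a ∈ T) (h : key a < key b) :
    rk T key a < rk T key b := by
  have hss : T.filter (fun x => key x < key a) ⊂ T.filter (fun x => key x < key b) := by
    refine ⟨Finset.monotone_filter_right T (fun x _ hx => lt_trans hx h), fun hsub => ?_⟩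
    have : a ∈ T.filter (fun x => key x < key a) :=
      hsub (Finset.mem_filter.2 ⟨ha, h⟩)
    simp at this
  simpa [rk] using Finset.card_lt_card hss

lemma rk_injOn (hinj : Set.InjOn key ↑T) : Set.InjOn (rk T key) ↑T := by
  intro a ha b hb h
  rcases lt_trichotomy (key a) (key b) with hlt | heq | hgt
  · exact absurd h (Nat.ne_of_lt (rk_lt_rk T key ha hlt))
  · exact hinj ha hb heq
  · exact absurd h.symm (Nat.ne_of_lt (rk_lt_rk T key hb hgt))

lemma rk_mem {a : α} (ha : a ∈ T) : rk T key a ∈ Finset.Icc 1 T.card := by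
  have hsub : T.filter (fun x => key x < key a) ⊆ T.erase a := by
    intro x hx
    rcases Finset.mem_filter.1 hx with ⟨hxT, hxlt⟩
    refine Finset.mem_erase.2 ⟨fun hxa => ?_, hxT⟩
    · rw [hxa] at hxlt; exact lt_irrefl _ hxlt
  have h1 : (T.filter (fun x => key x < key a)).card ≤ (T.erase a).card :=
    Finset.card_le_card hsub
  have h2 : (T.erase a).card + 1 = T.card := Finset.card_erase_add_one ha
  refine Finset.mem_Icc.2 ⟨Nat.le_add_left 1 _, ?_⟩
  simp only [rk]; omega

lemma rk_bijOn (hinj : Set.InjOn key ↑T) :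
    Set.BijOn (rk T key) ↑T (Set.Icc 1 T.card) := by
  have himg : T.image (rk T key) = Finset.Icc 1 T.card := by
    apply Finset.eq_of_subset_of_card_le
    · intro x hx
      rcases Finset.mem_image.1 hx with ⟨a, ha, rfl⟩
      exact rk_mem T key ha
    · rw [Finset.card_image_of_injOn (rk_injOn T key hinj), Nat.card_Icc]
      omega
  refine ⟨fun a ha => ?_, rk_injOn T key hinj, ?_⟩
  · rw [← Finset.coe_Icc]; exact_mod_cast rk_mem T key ha
  · intro x hx
    rw [← Finset.coe_Icc, ← himg, Finset.coe_image] at hx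
    exact hx

end Rank

section Tab
variable (lam : Finset (ℕ × ℕ)) (m : ℕ) (g : ℕ × ℕ → ℕ)

/-- Linear key: sort cells by decreasing part, ties broken lexicographically. -/
def ckey (p : ℕ × ℕ) : ℕ ×ₗ (ℕ ×ₗ ℕ) := toLex (m - g p, toLex (p.1, p.2))

lemma ckey_injective : Function.Injective (ckey m g) := by
  intro p q h
  have h2 : toLex ((p.1 : ℕ), p.2) = toLex ((q.1 : ℕ), q.2) := congrArg Prod.snd (toLex.injective h)
  have := toLex.injective h2
  exact Prod.ext (congrArg Prod.fst this) (congrArg Prod.snd this)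

/-- The standard tableau recording the order of parts of `g`. -/
def tab (p : ℕ × ℕ) : ℕ := if p ∈ lam then rk lam (ckey m g) p else 0

variable {lam m g}

lemma pp_le (hpp : IsPlanePartition lam m g) {p : ℕ × ℕ} (hp : p ∈ lam) : g p ≤ m := by
  rw [← hpp.2.2.1]
  exact Finset.single_le_sum (fun i _ => Nat.zero_le _) hp

lemma ckey_lt_of_gt (hpp : IsPlanePartition lam m g) {p q : ℕ × ℕ}
    (hp : p ∈ lam) (hq : q ∈ lam) (h : g p < g q) : ckey m g q < ckey m g p := by
  have h1 := pp_le hpp hp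
  have h2 := pp_le hpp hq
  rw [ckey, ckey, Prod.Lex.lt_iff]
  left; simp only [ofLex_toLex]; omega

lemma g_le_of_ckey_le (hpp : IsPlanePartition lam m g) {p q : ℕ × ℕ}
    (hp : p ∈ lam) (hq : q ∈ lam) (h : ckey m g q < ckey m g p) : g p ≤ g q := by
  have h1 := pp_le hpp hp
  have h2 := pp_le hpp hq
  rw [ckey, ckey, Prod.Lex.lt_iff] at h
  rcases h with h | ⟨h, _⟩ <;> simp only [ofLex_toLex] at h <;> omega

lemma tab_isSYT (hpp : IsPlanePartition lam m g) : IsSYT lam (tab lam m g) := by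
  have hkeyinj : Set.InjOn (ckey m g) ↑lam := (ckey_injective m g).injOn
  have hbij := rk_bijOn lam (ckey m g) hkeyinj
  refine ⟨fun p hp => if_neg hp, ?_, ?_⟩
  · exact hbij.congr (fun p hp => (if_pos hp).symm)
  · intro p hp q hq h1 h2 hne
    have hkey : ckey m g p < ckey m g q := by
      have hle : g q ≤ g p := hpp.2.2.2 p hp q hq h1 h2
      rcases lt_or_eq_of_le hle with hlt | heq
      · exact ckey_lt_of_gt hpp hq hp hlt
      · rw [ckey, ckey, Prod.Lex.lt_iff]
        right
        refine ⟨by simp only [ofLex_toLex]; omega, ?_⟩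
        rw [Prod.Lex.lt_iff]
        simp only [ofLex_toLex]
        rcases lt_or_eq_of_le h1 with hlt1 | heq1
        · left; exact hlt1
        · right
          refine ⟨heq1, lt_of_le_of_ne h2 fun h22 => hne (Prod.ext heq1 h22)⟩
    rw [tab, tab, if_pos hp, if_pos hq]
    exact rk_lt_rk lam (ckey m g) hp hkey

lemma tab_eq_of_mem {p : ℕ × ℕ} (hp : p ∈ lam) :
    tab lam m g p = (lam.filter (fun x => ckey m g x < ckey m g p)).card + 1 := by
  rw [tab, if_pos hp]; rfl

/-- lower bound: at least `tab p` parts are `≥ g p`. -/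
lemma cnt_ge_tab (hpp : IsPlanePartition lam m g) {p : ℕ × ℕ} (hp : p ∈ lam) :
    tab lam m g p ≤ (lam.filter (fun r => g p ≤ g r)).card := by
  have hsub : insert p (lam.filter (fun x => ckey m g x < ckey m g p))
      ⊆ lam.filter (fun r => g p ≤ g r) := by
    intro r hr
    rcases Finset.mem_insert.1 hr with rfl | hr
    · exact Finset.mem_filter.2 ⟨hp, le_refl _⟩
    · rcases Finset.mem_filter.1 hr with ⟨hrl, hrk⟩
      exact Finset.mem_filter.2 ⟨hrl, g_le_of_ckey_le hpp hp hrl hrk⟩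
  have hnot : p ∉ lam.filter (fun x => ckey m g x < ckey m g p) := by
    simp
  calc tab lam m g p = (insert p (lam.filter (fun x => ckey m g x < ckey m g p))).card := by
        rw [Finset.card_insert_of_notMem hnot, tab_eq_of_mem hp]
    _ ≤ _ := Finset.card_le_card hsub

/-- upper bound: fewer than `tab p` parts are `> g p`. -/
lemma cnt_lt_tab (hpp : IsPlanePartition lam m g) {p : ℕ × ℕ} (hp : p ∈ lam) :
    (lam.filter (fun r => g p + 1 ≤ g r)).card < tab lam m g p := by
  have hsub : lam.filter (fun r => g p + 1 ≤ g r)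
      ⊆ lam.filter (fun x => ckey m g x < ckey m g p) := by
    intro r hr
    rcases Finset.mem_filter.1 hr with ⟨hrl, hrk⟩
    exact Finset.mem_filter.2 ⟨hrl, ckey_lt_of_gt hpp hp hrl (by omega)⟩
  have := Finset.card_le_card hsub
  rw [tab_eq_of_mem hp]
  omega

lemma card_filter_le_eq_countP (s : Finset (ℕ × ℕ)) (g : ℕ × ℕ → ℕ) (x : ℕ) :
    (s.filter (fun a => x ≤ g a)).card = Multiset.countP (fun y => x ≤ y) (s.val.map g) := by
  rw [Multiset.countP_map]; rfl

lemma pp_inj {g1 g2 : ℕ × ℕ → ℕ} (h1 : IsPlanePartition lam m g1)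
    (h2 : IsPlanePartition lam m g2) (htab : tab lam m g1 = tab lam m g2)
    (hmul : lam.val.map g1 = lam.val.map g2) : g1 = g2 := by
  funext p
  by_cases hp : p ∈ lam
  · have hc : ∀ x : ℕ, (lam.filter (fun r => x ≤ g1 r)).card
        = (lam.filter (fun r => x ≤ g2 r)).card := by
      intro x
      rw [card_filter_le_eq_countP, card_filter_le_eq_countP, hmul]
    have hmono : ∀ x y : ℕ, x ≤ y →
        (lam.filter (fun r => y ≤ g1 r)).card ≤ (lam.filter (fun r => x ≤ g1 r)).card :=
      fun x y hxy => Finset.card_le_card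
        (Finset.monotone_filter_right lam (fun r _ hr => le_trans hxy hr))
    have ha1 := cnt_ge_tab h1 hp
    have hb1 := cnt_lt_tab h1 hp
    have ha2 := cnt_ge_tab h2 hp
    have hb2 := cnt_lt_tab h2 hp
    rw [htab] at ha1 hb1
    rw [hc] at ha1 hb1
    rcases lt_trichotomy (g1 p) (g2 p) with h | h | h
    · have := hmono (g1 p + 1) (g2 p) (by omega)
      rw [hc, hc] at this
      omega
    · exact h
    · have hmono2 : (lam.filter (fun r => g1 p ≤ g2 r)).card
          ≤ (lam.filter (fun r => g2 p + 1 ≤ g2 r)).card :=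
        Finset.card_le_card
          (Finset.monotone_filter_right lam (fun r _ hr => le_trans (by omega) hr))
      omega
  · rw [h1.1 p hp, h2.1 p hp]

lemma exists_pp {f : ℕ × ℕ → ℕ} (hf : IsSYT lam f) (s : Finset ℕ)
    (hcard : s.card = lam.card) (hsum : ∑ i ∈ s, i = m) (h0 : 0 ∉ s) :
    ∃ g, (IsPlanePartition lam m g ∧ Set.InjOn g ↑lam) ∧
      tab lam m g = f ∧ lam.image g = s := by
  set ρ : ℕ → ℕ := rk s (fun x : ℕ => OrderDual.toDual x) with hρ
  have hρbij : Set.BijOn ρ ↑s (Set.Icc 1 s.card) :=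
    rk_bijOn s _ (OrderDual.toDual.injective.injOn)
  set g : ℕ × ℕ → ℕ := fun p => if p ∈ lam then Function.invFunOn ρ ↑s (f p) else 0 with hg
  have hkey : ∀ p ∈ lam, g p ∈ s ∧ ρ (g p) = f p := by
    intro p hp
    have hfp : f p ∈ Set.Icc 1 s.card := by
      rw [hcard]; exact hf.2.1.1 hp
    obtain ⟨x, hx, hxe⟩ := hρbij.2.2 hfp
    have hex : ∃ a ∈ ↑s, ρ a = f p := ⟨x, hx, hxe⟩
    have : g p = Function.invFunOn ρ ↑s (f p) := if_pos hp
    rw [this]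
    exact ⟨Function.invFunOn_mem hex, Function.invFunOn_eq hex⟩
  have hanti : ∀ p ∈ lam, ∀ q ∈ lam, g p < g q → f q < f p := by
    intro p hp q hq h
    have := rk_lt_rk s (fun x : ℕ => OrderDual.toDual x)
      (a := g q) (b := g p) (hkey q hq).1 (by simpa using h)
    rw [← hρ, (hkey q hq).2, (hkey p hp).2] at this
    exact this
  have hginj : Set.InjOn g ↑lam := by
    intro p hp q hq h
    apply hf.2.1.2.1 hp hq
    rw [← (hkey p hp).2, ← (hkey q hq).2, h]
  have hmono : ∀ p ∈ lam, ∀ q ∈ lam, p.1 ≤ q.1 → p.2 ≤ q.2 → g q ≤ g p := by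
    intro p hp q hq h1 h2
    by_contra hcon
    push_neg at hcon
    have hne : p ≠ q := fun h => by rw [h] at hcon; exact lt_irrefl _ hcon
    exact absurd (hf.2.2 p hp q hq h1 h2 hne) (not_lt.2 (le_of_lt (hanti p hp q hq hcon)))
  have himg : lam.image g = s := by
    apply Finset.eq_of_subset_of_card_le
    · intro x hx
      rcases Finset.mem_image.1 hx with ⟨p, hp, rfl⟩
      exact (hkey p hp).1
    · rw [Finset.card_image_of_injOn hginj, hcard]
  have hsum2 : ∑ p ∈ lam, g p = m := by
    rw [← hsum, ← himg]
    exact (Finset.sum_image (f := fun x => x) (fun x hx y hy h => hginj hx hy h)).symm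
  have hpos : ∀ p ∈ lam, 1 ≤ g p := by
    intro p hp
    have := (hkey p hp).1
    rcases Nat.eq_zero_or_pos (g p) with h | h
    · rw [h] at this; exact absurd this h0
    · exact h
  have hpp : IsPlanePartition lam m g :=
    ⟨fun p hp => if_neg hp, hpos, hsum2, hmono⟩
  refine ⟨g, ⟨hpp, hginj⟩, ?_, himg⟩
  funext p
  by_cases hp : p ∈ lam
  · rw [tab_eq_of_mem hp]
    have hfil : lam.filter (fun r => ckey m g r < ckey m g p)
        = lam.filter (fun r => g p < g r) := by
      apply Finset.filter_congr
      intro r hr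
      constructor
      · intro h
        rcases lt_or_eq_of_le (g_le_of_ckey_le hpp hp hr h) with h' | h'
        · exact h'
        · exact absurd h (by rw [hginj hp hr h']; exact lt_irrefl _)
      · intro h
        exact ckey_lt_of_gt hpp hp hr h
    have hfil2 : (lam.filter (fun r => g p < g r)).card
        = (s.filter (fun y => g p < y)).card := by
      rw [← himg, Finset.filter_image]
      exact (Finset.card_image_of_injOn
        (hginj.mono (Finset.filter_subset _ _))).symm
    have hρgp : ρ (g p) = (s.filter (fun y => g p < y)).card + 1 := by
      have heq : s.filter (fun x => (OrderDual.toDual x : ℕᵒᵈ) < OrderDual.toDual (g p))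
          = s.filter (fun y => g p < y) :=
        Finset.filter_congr (fun x hx => by simp)
      rw [hρ, rk, heq]
    rw [hfil, hfil2, ← hρgp, (hkey p hp).2]
  · rw [tab, if_neg hp, (hf.1 p hp).symm]

end Tab

lemma ncard_prod' {α β : Type*} (A : Set α) (B : Set β) :
    (A ×ˢ B).ncard = A.ncard * B.ncard := by
  rw [← Nat.card_coe_set_eq, ← Nat.card_coe_set_eq, ← Nat.card_coe_set_eq,
    Nat.card_congr (Equiv.Set.prod A B), Nat.card_prod]

lemma syt_finite (lam : Finset (ℕ × ℕ)) : {f : ℕ × ℕ → ℕ | IsSYT lam f}.Finite := by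
  rw [← Set.finite_coe_iff]
  have : ∀ f : {f : ℕ × ℕ → ℕ | IsSYT lam f}, ∀ p : {p // p ∈ lam},
      f.1 p.1 ∈ Set.Icc 1 lam.card := fun f p => f.2.2.1.1 p.2
  apply Finite.of_injective
    (fun f : {f : ℕ × ℕ → ℕ | IsSYT lam f} =>
      (fun p : {p // p ∈ lam} => (⟨f.1 p.1, this f p⟩ : Set.Icc 1 lam.card)))
  intro f1 f2 h
  apply Subtype.ext
  funext p
  by_cases hp : p ∈ lam
  · have := congrFun h ⟨p, hp⟩
    exact congrArg Subtype.val this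
  · rw [f1.2.1 p hp, f2.2.1 p hp]

lemma mpart_finite (m k : ℕ) :
    {M : Multiset ℕ | Multiset.card M = k ∧ M.sum = m ∧ 0 ∉ M}.Finite := by
  rw [← Set.finite_coe_iff]
  apply Finite.of_injective
    (fun M : {M : Multiset ℕ | Multiset.card M = k ∧ M.sum = m ∧ 0 ∉ M} =>
      (⟨M.1, fun {i} hi => Nat.pos_of_ne_zero (fun h => M.2.2.2 (by subst h; exact hi)), M.2.2.1⟩ :
        Nat.Partition m))
  intro M1 M2 h
  exact Subtype.ext (congrArg Nat.Partition.parts h)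

/-- Distinct-part plane partitions of shape `λ` factor as a standard tableau times a
linear partition with distinct parts, and the total number of plane partitions of
shape `λ` is at most `d(λ)·p(m,k)`. -/
theorem plane_partition_counts (lam : Finset (ℕ × ℕ)) (k m : ℕ)
    (hdiag : IsDiagram lam) (hcard : lam.card = k) :
    dppCount lam m = sytCount lam * distinctPartitionCount m k ∧
    ppCount lam m ≤ sytCount lam * partitionCount m k := by
  subst hcard
  constructor
  · -- equality
    have hbij : Set.BijOn (fun g => (tab lam m g, lam.image g))
        {g : ℕ × ℕ → ℕ | IsPlanePartition lam m g ∧ Set.InjOn g ↑lam}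
        ({f : ℕ × ℕ → ℕ | IsSYT lam f} ×ˢ
          {s : Finset ℕ | s.card = lam.card ∧ (∑ i ∈ s, i) = m ∧ 0 ∉ s}) := by
      refine ⟨?_, ?_, ?_⟩
      · rintro g ⟨hpp, hinj⟩
        refine Set.mem_prod.2 ⟨tab_isSYT hpp, ?_, ?_, ?_⟩
        · exact Finset.card_image_of_injOn hinj
        · rw [Finset.sum_image (f := fun x => x) (fun x hx y hy h => hinj hx hy h)]
          exact hpp.2.2.1
        · intro h0
          rcases Finset.mem_image.1 h0 with ⟨p, hp, hp0⟩
          have := hpp.2.1 p hp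
          omega
      · rintro g1 ⟨hpp1, hinj1⟩ g2 ⟨hpp2, hinj2⟩ h
        have h1 : tab lam m g1 = tab lam m g2 := congrArg Prod.fst h
        have h2 : lam.image g1 = lam.image g2 := congrArg Prod.snd h
        have hmul : lam.val.map g1 = lam.val.map g2 := by
          rw [← Finset.image_val_of_injOn hinj1, ← Finset.image_val_of_injOn hinj2, h2]
        exact pp_inj hpp1 hpp2 h1 hmul
      · rintro ⟨f, s⟩ hfs
        rcases Set.mem_prod.1 hfs with ⟨hf, hs⟩
        obtain ⟨g, hg1, hg2, hg3⟩ := exists_pp hf s hs.1 hs.2.1 hs.2.2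
        exact ⟨g, hg1, Prod.ext hg2 hg3⟩
    rw [dppCount, sytCount, distinctPartitionCount, ← ncard_prod',
      ← Nat.card_coe_set_eq, ← Nat.card_coe_set_eq,
      Nat.card_congr (hbij.equiv _)]
  · -- inequality
    have hinj : Set.InjOn (fun g => (tab lam m g, lam.val.map g))
        {g : ℕ × ℕ → ℕ | IsPlanePartition lam m g} := by
      rintro g1 hpp1 g2 hpp2 h
      exact pp_inj hpp1 hpp2 (congrArg Prod.fst h) (congrArg Prod.snd h)
    have hsub : (fun g => (tab lam m g, lam.val.map g)) ''
        {g : ℕ × ℕ → ℕ | IsPlanePartition lam m g} ⊆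
        ({f : ℕ × ℕ → ℕ | IsSYT lam f} ×ˢ
          {M : Multiset ℕ | Multiset.card M = lam.card ∧ M.sum = m ∧ 0 ∉ M}) := by
      rintro _ ⟨g, hpp, rfl⟩
      refine Set.mem_prod.2 ⟨tab_isSYT hpp, ?_, ?_, ?_⟩
      · rw [Multiset.card_map]; rfl
      · exact hpp.2.2.1
      · intro h0
        rcases Multiset.mem_map.1 h0 with ⟨p, hp, hp0⟩
        have := hpp.2.1 p hp
        omega
    calc ppCount lam m
        = ((fun g => (tab lam m g, lam.val.map g)) ''
            {g : ℕ × ℕ → ℕ | IsPlanePartition lam m g}).ncard :=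
          (Set.ncard_image_of_injOn hinj).symm
      _ ≤ ({f : ℕ × ℕ → ℕ | IsSYT lam f} ×ˢ
            {M : Multiset ℕ | Multiset.card M = lam.card ∧ M.sum = m ∧ 0 ∉ M}).ncard :=
          Set.ncard_le_ncard hsub ((syt_finite lam).prod (mpart_finite m lam.card))
      _ = sytCount lam * partitionCount m lam.card := ncard_prod' _ _
end

section
/- For 0 < α < 1/2 and g_α(u) = (2/π)·u·arctan((1−2α)u/sqrt(2α(1−α)−u²)) + (√2/π)·arctan(sqrt(2(2α(1−α)−u²))/(1−2α)) on [−β, β] with β = sqrt(2α(1−α)), one has g_α(β) = g_α(−β) = β, and for each fixed u with |u| < β the map α ↦ g_α(u) has partial derivative ∂g_α(u)/∂α = sqrt(2α(1−α) − u²)/(π·α(1−α)) > 0, so the level curves g_α for different α do not intersect in the interior. -/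
open Real Filter

lemma hasDerivAt_g_aux (u a : ℝ) (ha0 : 0 < a) (ha1 : a < 1/2) (hu : u^2 < 2*a*(1-a)) :
    HasDerivAt (fun a : ℝ =>
      (2 / π) * u * Real.arctan ((1 - 2 * a) * u / Real.sqrt (2 * a * (1 - a) - u ^ 2)) +
      (Real.sqrt 2 / π) * Real.arctan (Real.sqrt (2 * (2 * a * (1 - a) - u ^ 2)) / (1 - 2 * a)))
      (Real.sqrt (2 * a * (1 - a) - u ^ 2) / (π * a * (1 - a))) a := by
  have hs : 0 < 2*a*(1-a) - u^2 := by linarith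
  have hb : (0:ℝ) < 1 - 2*a := by linarith
  have hr : 0 < Real.sqrt (2*a*(1-a) - u^2) := Real.sqrt_pos.mpr hs
  have hr2 : (Real.sqrt (2*a*(1-a) - u^2))^2 = 2*a*(1-a) - u^2 := Real.sq_sqrt hs.le
  have hq : Real.sqrt (2*(2*a*(1-a) - u^2)) = Real.sqrt 2 * Real.sqrt (2*a*(1-a) - u^2) :=
    Real.sqrt_mul (by norm_num) _
  have h1 : HasDerivAt (fun a : ℝ => 2*a*(1-a) - u^2) (2 - 4*a) a := by
    have := (((hasDerivAt_id a).const_mul 2).mul ((hasDerivAt_id a).const_sub 1)).sub_const (u^2)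
    refine this.congr_deriv ?_
    simp only [id_eq]; ring
  have h2 : HasDerivAt (fun a : ℝ => Real.sqrt (2*a*(1-a) - u^2))
      ((2 - 4*a) * (1 / (2 * Real.sqrt (2*a*(1-a) - u^2)))) a := by
    have := (Real.hasDerivAt_sqrt (ne_of_gt hs)).comp a h1
    refine this.congr_deriv ?_; ring
  have h3 : HasDerivAt (fun a : ℝ => (1 - 2*a) * u) (-2 * u) a := by
    have := (((hasDerivAt_id a).const_mul 2).const_sub 1).mul_const u
    refine this.congr_deriv ?_
    ring
  have h4 : HasDerivAt (fun a : ℝ => (1 - 2*a) * u / Real.sqrt (2*a*(1-a) - u^2))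
      (((-2*u) * Real.sqrt (2*a*(1-a) - u^2)
        - (1 - 2*a) * u * ((2 - 4*a) * (1 / (2 * Real.sqrt (2*a*(1-a) - u^2)))))
        / (Real.sqrt (2*a*(1-a) - u^2))^2) a := h3.div h2 (ne_of_gt hr)
  have h5 := (Real.hasDerivAt_arctan ((1 - 2*a) * u / Real.sqrt (2*a*(1-a) - u^2))).comp a h4
  have h6 := h5.const_mul ((2/π) * u)
  have h7 : HasDerivAt (fun a : ℝ => 2 * (2*a*(1-a) - u^2)) (2 * (2 - 4*a)) a := h1.const_mul 2
  have h8 : HasDerivAt (fun a : ℝ => Real.sqrt (2 * (2*a*(1-a) - u^2)))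
      ((2 * (2 - 4*a)) * (1 / (2 * Real.sqrt (2 * (2*a*(1-a) - u^2))))) a := by
    have := (Real.hasDerivAt_sqrt (by positivity : 2*(2*a*(1-a) - u^2) ≠ 0)).comp a h7
    refine this.congr_deriv ?_; ring
  have h9 : HasDerivAt (fun a : ℝ => (1:ℝ) - 2*a) (-2 : ℝ) a := by
    have := ((hasDerivAt_id a).const_mul 2).const_sub 1
    refine this.congr_deriv ?_
    norm_num
  have h10 : HasDerivAt (fun a : ℝ => Real.sqrt (2 * (2*a*(1-a) - u^2)) / (1 - 2*a))
      (((2 * (2 - 4*a)) * (1 / (2 * Real.sqrt (2 * (2*a*(1-a) - u^2)))) * (1 - 2*a)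
        - Real.sqrt (2 * (2*a*(1-a) - u^2)) * (-2)) / (1-2*a)^2) a := h8.div h9 (ne_of_gt hb)
  have h11 := (Real.hasDerivAt_arctan (Real.sqrt (2 * (2*a*(1-a) - u^2)) / (1 - 2*a))).comp a h10
  have h12 := h11.const_mul (Real.sqrt 2 / π)
  have h13 := h6.add h12
  refine h13.congr_deriv ?_; symm
  have hπ : π ≠ 0 := Real.pi_ne_zero
  have h2pos : (0:ℝ) < Real.sqrt 2 := by positivity
  have hsq2 : (Real.sqrt 2)^2 = 2 := Real.sq_sqrt (by norm_num)
  rw [hq]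
  have hane : a ≠ 0 := ne_of_gt ha0
  have h1ane : (1:ℝ) - a ≠ 0 := by linarith
  have hbne : (1:ℝ) - 2*a ≠ 0 := ne_of_gt hb
  generalize hR : Real.sqrt (2*a*(1-a)-u^2) = r at hr hr2 ⊢
  generalize hW : Real.sqrt 2 = w at h2pos hsq2 ⊢
  field_simp
  rw [hsq2, hr2]; field_simp; ring


/-- Properties of the level curves `g_α` of the limit surface of random square
Young tableaux: endpoint values `g_α(±β) = β` (as limits from the interior),
the partial derivative in `α` is the positive semicircle density, and level
curves for different `α` do not cross in the interior. -/
theorem level_curve_endpoints_and_monotonicity (α : ℝ) (hα0 : 0 < α) (hα1 : α < 1 / 2) :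
    let g : ℝ → ℝ → ℝ := fun a u =>
      (2 / π) * u * Real.arctan ((1 - 2 * a) * u / Real.sqrt (2 * a * (1 - a) - u ^ 2)) +
      (Real.sqrt 2 / π) * Real.arctan (Real.sqrt (2 * (2 * a * (1 - a) - u ^ 2)) / (1 - 2 * a))
    let β := Real.sqrt (2 * α * (1 - α))
    (Filter.Tendsto (fun u => g α u) (nhdsWithin β (Set.Iio β)) (nhds β)) ∧
    (Filter.Tendsto (fun u => g α u) (nhdsWithin (-β) (Set.Ioi (-β))) (nhds β)) ∧
    (∀ u : ℝ, |u| < β →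
      HasDerivAt (fun a => g a u)
        (Real.sqrt (2 * α * (1 - α) - u ^ 2) / (π * α * (1 - α))) α ∧
      0 < Real.sqrt (2 * α * (1 - α) - u ^ 2) / (π * α * (1 - α))) ∧
    (∀ α' : ℝ, α < α' → α' < 1 / 2 → ∀ u : ℝ, |u| < β → g α u < g α' u) := by
  intro g β
  have hb : (0 : ℝ) < 1 - 2 * α := by linarith
  have hsα : (0:ℝ) < 2 * α * (1 - α) := by nlinarith
  have hβpos : 0 < β := Real.sqrt_pos.mpr hsα
  have hβ2 : β ^ 2 = 2 * α * (1 - α) := Real.sq_sqrt hsα.le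
  have hπ : (0:ℝ) < π := Real.pi_pos
  -- continuity of second term
  have hc2 : Continuous (fun u : ℝ =>
      (Real.sqrt 2 / π) * Real.arctan (Real.sqrt (2 * (2 * α * (1 - α) - u ^ 2)) / (1 - 2 * α))) := by
    apply Continuous.mul continuous_const
    apply Real.continuous_arctan.comp
    apply Continuous.div_const
    exact Real.continuous_sqrt.comp (continuous_const.mul (continuous_const.sub (continuous_pow 2)))
  have hzero : ∀ v : ℝ, v ^ 2 = 2 * α * (1 - α) →
      (Real.sqrt 2 / π) * Real.arctan (Real.sqrt (2 * (2 * α * (1 - α) - v ^ 2)) / (1 - 2 * α)) = 0 := by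
    intro v hv
    rw [hv, sub_self, mul_zero, Real.sqrt_zero, zero_div, Real.arctan_zero, mul_zero]
  -- limit of the first term at an endpoint, generic over the sign
  have hIooR : Set.Ioo (0:ℝ) β ∈ nhdsWithin β (Set.Iio β) :=
    Ioo_mem_nhdsLT_of_mem ⟨hβpos, le_refl β⟩
  have hIooL : Set.Ioo (-β) (0:ℝ) ∈ nhdsWithin (-β) (Set.Ioi (-β)) :=
    Ioo_mem_nhdsGT_of_mem ⟨le_refl (-β), by linarith⟩
  have hdenR : Filter.Tendsto (fun u : ℝ => Real.sqrt (2 * α * (1 - α) - u ^ 2))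
      (nhdsWithin β (Set.Iio β)) (nhdsWithin 0 (Set.Ioi 0)) := by
    apply tendsto_nhdsWithin_of_tendsto_nhds_of_eventually_within
    · have hc : Continuous (fun u : ℝ => Real.sqrt (2 * α * (1 - α) - u ^ 2)) :=
        Real.continuous_sqrt.comp (continuous_const.sub (continuous_pow 2))
      have := (hc.tendsto β).mono_left (nhdsWithin_le_nhds (s := Set.Iio β))
      simpa [hβ2] using this
    · filter_upwards [hIooR] with u hu
      have : u ^ 2 < 2 * α * (1 - α) := by nlinarith [hu.1, hu.2, hβ2]
      exact Real.sqrt_pos.mpr (by linarith)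
  have hdenL : Filter.Tendsto (fun u : ℝ => Real.sqrt (2 * α * (1 - α) - u ^ 2))
      (nhdsWithin (-β) (Set.Ioi (-β))) (nhdsWithin 0 (Set.Ioi 0)) := by
    apply tendsto_nhdsWithin_of_tendsto_nhds_of_eventually_within
    · have hc : Continuous (fun u : ℝ => Real.sqrt (2 * α * (1 - α) - u ^ 2)) :=
        Real.continuous_sqrt.comp (continuous_const.sub (continuous_pow 2))
      have := (hc.tendsto (-β)).mono_left (nhdsWithin_le_nhds (s := Set.Ioi (-β)))
      simpa [hβ2] using this
    · filter_upwards [hIooL] with u hu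
      have : u ^ 2 < 2 * α * (1 - α) := by nlinarith [hu.1, hu.2, hβ2]
      exact Real.sqrt_pos.mpr (by linarith)
  have hinvR := tendsto_inv_nhdsGT_zero.comp hdenR
  have hinvL := tendsto_inv_nhdsGT_zero.comp hdenL
  refine ⟨?_, ?_, ?_, ?_⟩
  · -- limit at β from the left
    have hnum : Filter.Tendsto (fun u : ℝ => (1 - 2 * α) * u) (nhdsWithin β (Set.Iio β))
        (nhds ((1 - 2 * α) * β)) :=
      ((continuous_const.mul continuous_id).tendsto β).mono_left nhdsWithin_le_nhds
    have hfrac : Filter.Tendsto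
        (fun u : ℝ => (1 - 2 * α) * u / Real.sqrt (2 * α * (1 - α) - u ^ 2))
        (nhdsWithin β (Set.Iio β)) atTop := by
      simp only [div_eq_mul_inv]
      exact hnum.pos_mul_atTop (by positivity) hinvR
    have harct : Filter.Tendsto
        (fun u : ℝ => Real.arctan ((1 - 2 * α) * u / Real.sqrt (2 * α * (1 - α) - u ^ 2)))
        (nhdsWithin β (Set.Iio β)) (nhds (π / 2)) :=
      (Real.tendsto_arctan_atTop.mono_right nhdsWithin_le_nhds).comp hfrac
    have hcoef : Filter.Tendsto (fun u : ℝ => (2 / π) * u) (nhdsWithin β (Set.Iio β))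
        (nhds ((2 / π) * β)) :=
      ((continuous_const.mul continuous_id).tendsto β).mono_left nhdsWithin_le_nhds
    have ht1 := hcoef.mul harct
    have ht2 : Filter.Tendsto (fun u : ℝ =>
        (Real.sqrt 2 / π) * Real.arctan (Real.sqrt (2 * (2 * α * (1 - α) - u ^ 2)) / (1 - 2 * α)))
        (nhdsWithin β (Set.Iio β)) (nhds 0) := by
      have := (hc2.tendsto β).mono_left (nhdsWithin_le_nhds (s := Set.Iio β))
      rwa [hzero β hβ2] at this
    have := ht1.add ht2
    have hval : (2 / π) * β * (π / 2) + 0 = β := by field_simp; ring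
    rwa [hval] at this
  · -- limit at -β from the right
    have hnum : Filter.Tendsto (fun u : ℝ => (1 - 2 * α) * u) (nhdsWithin (-β) (Set.Ioi (-β)))
        (nhds ((1 - 2 * α) * (-β))) :=
      ((continuous_const.mul continuous_id).tendsto (-β)).mono_left nhdsWithin_le_nhds
    have hfrac : Filter.Tendsto
        (fun u : ℝ => (1 - 2 * α) * u / Real.sqrt (2 * α * (1 - α) - u ^ 2))
        (nhdsWithin (-β) (Set.Ioi (-β))) atBot := by
      simp only [div_eq_mul_inv]
      exact hnum.neg_mul_atTop (by nlinarith) hinvL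
    have harct : Filter.Tendsto
        (fun u : ℝ => Real.arctan ((1 - 2 * α) * u / Real.sqrt (2 * α * (1 - α) - u ^ 2)))
        (nhdsWithin (-β) (Set.Ioi (-β))) (nhds (-(π / 2))) :=
      (Real.tendsto_arctan_atBot.mono_right nhdsWithin_le_nhds).comp hfrac
    have hcoef : Filter.Tendsto (fun u : ℝ => (2 / π) * u) (nhdsWithin (-β) (Set.Ioi (-β)))
        (nhds ((2 / π) * (-β))) :=
      ((continuous_const.mul continuous_id).tendsto (-β)).mono_left nhdsWithin_le_nhds
    have ht1 := hcoef.mul harct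
    have ht2 : Filter.Tendsto (fun u : ℝ =>
        (Real.sqrt 2 / π) * Real.arctan (Real.sqrt (2 * (2 * α * (1 - α) - u ^ 2)) / (1 - 2 * α)))
        (nhdsWithin (-β) (Set.Ioi (-β))) (nhds 0) := by
      have := (hc2.tendsto (-β)).mono_left (nhdsWithin_le_nhds (s := Set.Ioi (-β)))
      rwa [hzero (-β) (by rw [neg_pow]; simpa using hβ2)] at this
    have := ht1.add ht2
    have hval : (2 / π) * (-β) * (-(π / 2)) + 0 = β := by field_simp; ring
    rwa [hval] at this
  · -- derivative in α
    intro u hu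
    have hu2 : u ^ 2 < 2 * α * (1 - α) := by
      have h1 : |u| ^ 2 < β ^ 2 := by
        apply pow_lt_pow_left₀ hu (abs_nonneg u)
        norm_num
      rwa [sq_abs, hβ2] at h1
    have hspos : (0:ℝ) < 2 * α * (1 - α) - u ^ 2 := by linarith
    refine ⟨hasDerivAt_g_aux u α hα0 hα1 hu2, ?_⟩
    have h1 : 0 < Real.sqrt (2 * α * (1 - α) - u ^ 2) := Real.sqrt_pos.mpr hspos
    have h2 : (0:ℝ) < π * α * (1 - α) := by
      apply mul_pos (mul_pos hπ hα0); linarith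
    exact div_pos h1 h2
  · -- monotonicity
    intro α' hαα' hα'1 u hu
    have hu2 : u ^ 2 < 2 * α * (1 - α) := by
      have h1 : |u| ^ 2 < β ^ 2 := by
        apply pow_lt_pow_left₀ hu (abs_nonneg u)
        norm_num
      rwa [sq_abs, hβ2] at h1
    have key : ∀ a ∈ Set.Icc α α', u ^ 2 < 2 * a * (1 - a) := by
      intro a ha
      have h1 : 0 ≤ a - α := by linarith [ha.1]
      have h2 : 0 ≤ 1 - a - α := by linarith [ha.2]
      nlinarith [mul_nonneg h1 h2]
    have hderiv : ∀ a ∈ Set.Icc α α',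
        HasDerivAt (fun a => g a u)
          (Real.sqrt (2 * a * (1 - a) - u ^ 2) / (π * a * (1 - a))) a := by
      intro a ha
      exact hasDerivAt_g_aux u a (lt_of_lt_of_le hα0 ha.1) (lt_of_le_of_lt ha.2 hα'1) (key a ha)
    have hmono : StrictMonoOn (fun a => g a u) (Set.Icc α α') := by
      apply strictMonoOn_of_deriv_pos (convex_Icc α α')
      · intro a ha
        exact (hderiv a ha).continuousAt.continuousWithinAt
      · intro a ha
        rw [interior_Icc] at ha
        have ha' : a ∈ Set.Icc α α' := ⟨ha.1.le, ha.2.le⟩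
        rw [(hderiv a ha').deriv]
        have hspos : (0:ℝ) < 2 * a * (1 - a) - u ^ 2 := by linarith [key a ha']
        have h1 : 0 < Real.sqrt (2 * a * (1 - a) - u ^ 2) := Real.sqrt_pos.mpr hspos
        have h2 : (0:ℝ) < π * a * (1 - a) := by
          have := ha.1; have := ha.2
          apply mul_pos (mul_pos hπ (by linarith)); linarith
        exact div_pos h1 h2
    exact hmono ⟨le_refl α, hαα'.le⟩ ⟨hαα'.le, le_refl α'⟩ hαα'
end
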